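/- arXiv:1509.01359 — 5 statements merged into one kernel-verified Lean document; each statement's English description precedes it below -/
import Mathlib

section
/- For every r > 0 it holds that g₁/(g₁ − 1) ≤ G̃′(r)·r/G̃(r) ≤ g₀/(g₀ − 1), i.e. (g₁/(g₁ − 1))·G̃(r) ≤ g⁻¹(r)·r ≤ (g₀/(g₀ − 1))·G̃(r). -/
/-- With `G̃(r) = ∫₀^r g⁻¹`, one has `(g₁/(g₁−1)) G̃(r) ≤ g⁻¹(r) r ≤ (g₀/(g₀−1)) G̃(r)`
(i.e. `g₁/(g₁−1) ≤ G̃'(r)r/G̃(r) ≤ g₀/(g₀−1)`) for every `r > 0`. -/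
theorem stmt_6 (g₀ g₁ : ℝ) (hg₀ : 1 < g₀) (hg₀₁ : g₀ ≤ g₁)
    (g g' : ℝ → ℝ)
    (hg_pos : ∀ s : ℝ, 0 < s → 0 < g s)
    (hg_deriv : ∀ s : ℝ, 0 < s → HasDerivAt g (g' s) s)
    (hg'_cont : ContinuousOn g' (Set.Ioi 0))
    (hg_orlicz : ∀ s : ℝ, 0 < s → g₀ - 1 ≤ s * g' s / g s ∧ s * g' s / g s ≤ g₁ - 1)
    (ginv : ℝ → ℝ)
    (hginv_left : ∀ s : ℝ, 0 < s → ginv (g s) = s)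
    (hginv_right : ∀ r : ℝ, 0 < r → g (ginv r) = r) :
    ∀ r : ℝ, 0 < r →
      g₁ / (g₁ - 1) * (∫ ρ in (0:ℝ)..r, ginv ρ) ≤ ginv r * r ∧
      ginv r * r ≤ g₀ / (g₀ - 1) * (∫ ρ in (0:ℝ)..r, ginv ρ) := by
  have hg₁ : 1 < g₁ := lt_of_lt_of_le hg₀ hg₀₁
  -- key inequalities without division
  have key₀ : ∀ s : ℝ, 0 < s → (g₀ - 1) * g s ≤ s * g' s := by
    intro s hs
    exact (le_div_iff₀ (hg_pos s hs)).1 (hg_orlicz s hs).1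
  have key₁ : ∀ s : ℝ, 0 < s → s * g' s ≤ (g₁ - 1) * g s := by
    intro s hs
    exact (div_le_iff₀ (hg_pos s hs)).1 (hg_orlicz s hs).2
  have hg'_pos : ∀ s : ℝ, 0 < s → 0 < g' s := by
    intro s hs
    have := key₀ s hs
    nlinarith [hg_pos s hs]
  -- g is strictly monotone on (0,∞)
  have gcont : ContinuousOn g (Set.Ioi 0) := fun s hs =>
    (hg_deriv s hs).continuousAt.continuousWithinAt
  have gstrict : StrictMonoOn g (Set.Ioi 0) := by
    apply strictMonoOn_of_deriv_pos (convex_Ioi 0) gcont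
    intro x hx
    rw [interior_Ioi] at hx
    rw [(hg_deriv x hx).deriv]
    exact hg'_pos x hx
  -- comparison function u(s) = log (g s) - (g₀-1) log s is monotone on (0,∞)
  have uderiv : ∀ s : ℝ, 0 < s →
      HasDerivAt (fun x => Real.log (g x) - (g₀ - 1) * Real.log x)
        (g' s / g s - (g₀ - 1) * s⁻¹) s := by
    intro s hs
    exact ((hg_deriv s hs).log (ne_of_gt (hg_pos s hs))).sub
      ((Real.hasDerivAt_log (ne_of_gt hs)).const_mul (g₀ - 1))
  have umono : MonotoneOn (fun x => Real.log (g x) - (g₀ - 1) * Real.log x) (Set.Ioi 0) := by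
    apply monotoneOn_of_deriv_nonneg (convex_Ioi 0)
    · exact fun s hs => (uderiv s hs).continuousAt.continuousWithinAt
    · rw [interior_Ioi]
      exact fun s hs => (uderiv s hs).differentiableAt.differentiableWithinAt
    · intro s hs
      rw [interior_Ioi] at hs
      rw [(uderiv s hs).deriv]
      have h1 := key₀ s hs
      have h2 := hg_pos s hs
      have h3 : (g₀ - 1) / s ≤ g' s / g s := by
        rw [div_le_div_iff₀ hs h2]; nlinarith
      have h4 : (g₀ - 1) * s⁻¹ = (g₀ - 1) / s := by ring
      rw [sub_nonneg, h4]
      exact h3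
  -- pointwise comparison with powers
  have comp_le : ∀ a : ℝ, 0 < a → a ≤ 1 → g a ≤ g 1 * a ^ (g₀ - 1) := by
    intro a ha ha1
    have := umono (Set.mem_Ioi.2 ha) (Set.mem_Ioi.2 one_pos) ha1
    simp only [Real.log_one, mul_zero, sub_zero] at this
    have hpow : Real.log (g 1 * a ^ (g₀ - 1)) = Real.log (g 1) + (g₀ - 1) * Real.log a := by
      rw [Real.log_mul (ne_of_gt (hg_pos 1 one_pos)) (ne_of_gt (Real.rpow_pos_of_pos ha _)),
        Real.log_rpow ha]
    have hlog : Real.log (g a) ≤ Real.log (g 1 * a ^ (g₀ - 1)) := by rw [hpow]; linarith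
    have hpos : (0:ℝ) < g 1 * a ^ (g₀ - 1) :=
      mul_pos (hg_pos 1 one_pos) (Real.rpow_pos_of_pos ha _)
    exact (Real.log_le_log_iff (hg_pos a ha) hpos).1 hlog
  have comp_ge : ∀ b : ℝ, 1 ≤ b → g 1 * b ^ (g₀ - 1) ≤ g b := by
    intro b hb
    have hb0 : (0:ℝ) < b := lt_of_lt_of_le one_pos hb
    have := umono (Set.mem_Ioi.2 one_pos) (Set.mem_Ioi.2 hb0) hb
    simp only [Real.log_one, mul_zero, sub_zero] at this
    have hpow : Real.log (g 1 * b ^ (g₀ - 1)) = Real.log (g 1) + (g₀ - 1) * Real.log b := by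
      rw [Real.log_mul (ne_of_gt (hg_pos 1 one_pos)) (ne_of_gt (Real.rpow_pos_of_pos hb0 _)),
        Real.log_rpow hb0]
    have hlog : Real.log (g 1 * b ^ (g₀ - 1)) ≤ Real.log (g b) := by rw [hpow]; linarith
    have hpos : (0:ℝ) < g 1 * b ^ (g₀ - 1) :=
      mul_pos (hg_pos 1 one_pos) (Real.rpow_pos_of_pos hb0 _)
    exact (Real.log_le_log_iff hpos (hg_pos b hb0)).1 hlog
  -- surjectivity of g onto (0,∞)
  have surj : ∀ ρ : ℝ, 0 < ρ → ∃ s : ℝ, 0 < s ∧ g s = ρ := by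
    intro ρ hρ
    have hg1 : (0:ℝ) < g 1 := hg_pos 1 one_pos
    have hexp : (0:ℝ) < g₀ - 1 := by linarith
    set c : ℝ := (ρ / g 1) ^ (g₀ - 1)⁻¹ with hc
    have hcpos : 0 < c := Real.rpow_pos_of_pos (div_pos hρ hg1) _
    have hcpow : c ^ (g₀ - 1) = ρ / g 1 :=
      Real.rpow_inv_rpow (le_of_lt (div_pos hρ hg1)) (ne_of_gt hexp)
    set a : ℝ := min 1 c with ha
    set b : ℝ := max 1 c with hb
    have ha0 : 0 < a := lt_min one_pos hcpos
    have hab : a ≤ b := le_trans (min_le_left _ _) (le_max_left _ _)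
    have hga : g a ≤ ρ := by
      have h1 : g a ≤ g 1 * a ^ (g₀ - 1) := comp_le a ha0 (min_le_left _ _)
      have h2 : a ^ (g₀ - 1) ≤ c ^ (g₀ - 1) :=
        Real.rpow_le_rpow (le_of_lt ha0) (min_le_right _ _) (le_of_lt hexp)
      have h3 : g 1 * a ^ (g₀ - 1) ≤ g 1 * (ρ / g 1) := by
        rw [← hcpow]; exact mul_le_mul_of_nonneg_left h2 (le_of_lt hg1)
      rw [mul_div_cancel₀ ρ (ne_of_gt hg1)] at h3
      linarith
    have hgb : ρ ≤ g b := by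
      have h1 : g 1 * b ^ (g₀ - 1) ≤ g b := comp_ge b (le_max_left _ _)
      have h2 : c ^ (g₀ - 1) ≤ b ^ (g₀ - 1) :=
        Real.rpow_le_rpow (le_of_lt hcpos) (le_max_right _ _) (le_of_lt hexp)
      have h3 : g 1 * (ρ / g 1) ≤ g 1 * b ^ (g₀ - 1) := by
        rw [← hcpow]; exact mul_le_mul_of_nonneg_left h2 (le_of_lt hg1)
      rw [mul_div_cancel₀ ρ (ne_of_gt hg1)] at h3
      linarith
    have hsub : Set.Icc a b ⊆ Set.Ioi 0 := fun x hx => lt_of_lt_of_le ha0 hx.1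
    obtain ⟨s, hs, hgs⟩ := intermediate_value_Icc hab (gcont.mono hsub) ⟨hga, hgb⟩
    exact ⟨s, lt_of_lt_of_le ha0 hs.1, hgs⟩
  -- properties of ginv
  have ginv_pos : ∀ ρ : ℝ, 0 < ρ → 0 < ginv ρ := by
    intro ρ hρ
    obtain ⟨s, hs, hgs⟩ := surj ρ hρ
    rw [← hgs, hginv_left s hs]; exact hs
  have ginv_strict : ∀ ρ ρ' : ℝ, 0 < ρ → ρ < ρ' → ginv ρ < ginv ρ' := by
    intro ρ ρ' hρ hρρ'
    have hρ' : 0 < ρ' := lt_trans hρ hρρ'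
    by_contra hcon
    push_neg at hcon
    have := gstrict.monotoneOn (Set.mem_Ioi.2 (ginv_pos ρ' hρ')) (Set.mem_Ioi.2 (ginv_pos ρ hρ))
      hcon
    rw [hginv_right ρ hρ, hginv_right ρ' hρ'] at this
    linarith
  -- monotone extension h of ginv
  set h : ℝ → ℝ := fun ρ => if 0 < ρ then ginv ρ else 0 with hh
  have h_eq : ∀ ρ : ℝ, 0 < ρ → h ρ = ginv ρ := fun ρ hρ => if_pos hρ
  have h_nonneg : ∀ ρ : ℝ, 0 ≤ h ρ := by
    intro ρ
    by_cases hρ : 0 < ρ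
    · rw [h_eq ρ hρ]; exact le_of_lt (ginv_pos ρ hρ)
    · simp only [hh, if_neg hρ]; exact le_refl 0
  have h_mono : Monotone h := by
    intro x y hxy
    by_cases hx : 0 < x
    · have hy : 0 < y := lt_of_lt_of_le hx hxy
      rw [h_eq x hx, h_eq y hy]
      rcases lt_or_eq_of_le hxy with hlt | heq
      · exact le_of_lt (ginv_strict x y hx hlt)
      · rw [heq]
    · by_cases hy : 0 < y
      · simp only [hh, if_neg hx, if_pos hy]
        exact le_of_lt (ginv_pos y hy)
      · simp only [hh, if_neg hx, if_neg hy]; exact le_refl 0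
  have h_int : ∀ a b : ℝ, IntervalIntegrable h MeasureTheory.volume a b := fun a b =>
    h_mono.intervalIntegrable
  -- continuity of h at positive points
  have h_cont : ∀ r : ℝ, 0 < r → ContinuousAt h r := by
    intro r hr
    rw [Metric.continuousAt_iff]
    intro ε hε
    set t := ginv r with htdef
    have ht : 0 < t := ginv_pos r hr
    have hgt : g t = r := hginv_right r hr
    set ε' : ℝ := min (ε / 2) (t / 2) with hε'def
    have hε' : 0 < ε' := lt_min (by linarith) (by linarith)
    have hε'ε : ε' < ε := lt_of_le_of_lt (min_le_left _ _) (by linarith)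
    have hε't : ε' ≤ t / 2 := min_le_right _ _
    have h1 : 0 < t - ε' := by linarith
    have h2 : 0 < t + ε' := by linarith
    have hlt : g (t - ε') < r := by
      rw [← hgt]
      exact gstrict (Set.mem_Ioi.2 h1) (Set.mem_Ioi.2 ht) (by linarith)
    have hgt2 : r < g (t + ε') := by
      rw [← hgt]
      exact gstrict (Set.mem_Ioi.2 ht) (Set.mem_Ioi.2 h2) (by linarith)
    refine ⟨min (r - g (t - ε')) (g (t + ε') - r), lt_min (by linarith) (by linarith), ?_⟩
    intro x hx
    rw [Real.dist_eq] at hx ⊢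
    have hx' := abs_lt.1 hx
    have hd1 : min (r - g (t - ε')) (g (t + ε') - r) ≤ r - g (t - ε') := min_le_left _ _
    have hd2 : min (r - g (t - ε')) (g (t + ε') - r) ≤ g (t + ε') - r := min_le_right _ _
    have hx1 : g (t - ε') < x := by linarith [hx'.1]
    have hx2 : x < g (t + ε') := by linarith [hx'.2]
    have hxpos : 0 < x := lt_trans (hg_pos _ h1) hx1
    have ha : t - ε' < ginv x := by
      have := ginv_strict (g (t - ε')) x (hg_pos _ h1) hx1
      rwa [hginv_left _ h1] at this
    have hb2 : ginv x < t + ε' := by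
      have := ginv_strict x (g (t + ε')) hxpos hx2
      rwa [hginv_left _ h2] at this
    rw [h_eq x hxpos, h_eq r hr, ← htdef]
    rw [abs_lt]
    constructor <;> linarith
  -- the primitive Φ
  set Φ : ℝ → ℝ := fun x => ∫ ρ in (0:ℝ)..x, h ρ with hΦ
  have Φ_deriv : ∀ r : ℝ, 0 < r → HasDerivAt Φ (h r) r := by
    intro r hr
    exact intervalIntegral.integral_hasDerivAt_right (h_int 0 r)
      (h_mono.measurable.stronglyMeasurable.stronglyMeasurableAtFilter) (h_cont r hr)
  have Φ_nonneg : ∀ x : ℝ, 0 ≤ x → 0 ≤ Φ x := by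
    intro x hx
    have h0 : (∫ ρ in (0:ℝ)..x, (0:ℝ)) ≤ Φ x :=
      intervalIntegral.integral_mono_on hx intervalIntegrable_const (h_int 0 x)
        (fun ρ _ => h_nonneg ρ)
    simpa using h0
  have Φ_le : ∀ x : ℝ, 0 ≤ x → Φ x ≤ x * h x := by
    intro x hx
    have hconst : (∫ ρ in (0:ℝ)..x, h x) = x * h x := by
      rw [intervalIntegral.integral_const, smul_eq_mul, sub_zero]
    rw [hΦ, ← hconst]
    exact intervalIntegral.integral_mono_on hx (h_int 0 x) intervalIntegrable_const
      (fun ρ hρ => h_mono hρ.2)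
  -- derivative of Φ ∘ g
  have comp_deriv : ∀ s : ℝ, 0 < s → HasDerivAt (fun x => Φ (g x)) (s * g' s) s := by
    intro s hs
    have := HasDerivAt.comp s (Φ_deriv (g s) (hg_pos s hs)) (hg_deriv s hs)
    rwa [h_eq (g s) (hg_pos s hs), hginv_left s hs] at this
  -- ψ for the upper comparison: (g₁-1) s g(s) - g₁ Φ(g s) is monotone and → 0
  have ψderiv : ∀ s : ℝ, 0 < s →
      HasDerivAt (fun x => (g₁ - 1) * (x * g x) - g₁ * Φ (g x))
        ((g₁ - 1) * (1 * g s + s * g' s) - g₁ * (s * g' s)) s := by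
    intro s hs
    exact (((hasDerivAt_id s).mul (hg_deriv s hs)).const_mul (g₁ - 1)).sub
      ((comp_deriv s hs).const_mul g₁)
  have ψmono : MonotoneOn (fun x => (g₁ - 1) * (x * g x) - g₁ * Φ (g x)) (Set.Ioi 0) := by
    apply monotoneOn_of_deriv_nonneg (convex_Ioi 0)
    · exact fun s hs => (ψderiv s hs).continuousAt.continuousWithinAt
    · rw [interior_Ioi]
      exact fun s hs => (ψderiv s hs).differentiableAt.differentiableWithinAt
    · intro s hs
      rw [interior_Ioi] at hs
      rw [(ψderiv s hs).deriv]
      have := key₁ s hs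
      nlinarith
  have φderiv : ∀ s : ℝ, 0 < s →
      HasDerivAt (fun x => g₀ * Φ (g x) - (g₀ - 1) * (x * g x))
        (g₀ * (s * g' s) - (g₀ - 1) * (1 * g s + s * g' s)) s := by
    intro s hs
    exact ((comp_deriv s hs).const_mul g₀).sub
      (((hasDerivAt_id s).mul (hg_deriv s hs)).const_mul (g₀ - 1))
  have φmono : MonotoneOn (fun x => g₀ * Φ (g x) - (g₀ - 1) * (x * g x)) (Set.Ioi 0) := by
    apply monotoneOn_of_deriv_nonneg (convex_Ioi 0)
    · exact fun s hs => (φderiv s hs).continuousAt.continuousWithinAt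
    · rw [interior_Ioi]
      exact fun s hs => (φderiv s hs).differentiableAt.differentiableWithinAt
    · intro s hs
      rw [interior_Ioi] at hs
      rw [(φderiv s hs).deriv]
      have := key₀ s hs
      nlinarith
  -- smallness near 0 : ε * g ε ≤ g 1 * ε ^ g₀ for 0 < ε ≤ 1
  have small : ∀ ε : ℝ, 0 < ε → ε ≤ 1 → ε * g ε ≤ g 1 * ε ^ g₀ := by
    intro ε hε hε1
    have h1 : g ε ≤ g 1 * ε ^ (g₀ - 1) := comp_le ε hε hε1
    have h2 : ε * g ε ≤ ε * (g 1 * ε ^ (g₀ - 1)) := mul_le_mul_of_nonneg_left h1 (le_of_lt hε)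
    have h3 : ε * (g 1 * ε ^ (g₀ - 1)) = g 1 * ε ^ g₀ := by
      have he : ε ^ g₀ = ε ^ ((1:ℝ) + (g₀ - 1)) := by norm_num
      rw [he, Real.rpow_add hε, Real.rpow_one]; ring
    rw [← h3]; exact h2
  -- εgε tends to 0
  have tendsto_small : Filter.Tendsto (fun ε : ℝ => ε * g ε) (nhdsWithin 0 (Set.Ioi 0))
      (nhds 0) := by
    have hpow : Filter.Tendsto (fun ε : ℝ => g 1 * ε ^ g₀) (nhdsWithin 0 (Set.Ioi 0))
        (nhds 0) := by
      have hc : ContinuousAt (fun x : ℝ => x ^ g₀) 0 :=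
        Real.continuousAt_rpow_const 0 g₀ (Or.inr (by linarith))
      have : Filter.Tendsto (fun ε : ℝ => ε ^ g₀) (nhdsWithin 0 (Set.Ioi 0)) (nhds 0) := by
        have h0 : (0:ℝ) ^ g₀ = 0 := Real.zero_rpow (by linarith)
        have := hc.tendsto
        rw [h0] at this
        exact this.mono_left nhdsWithin_le_nhds
      have := this.const_mul (g 1)
      rwa [mul_zero] at this
    apply squeeze_zero'
    · filter_upwards [self_mem_nhdsWithin] with ε hε
      exact le_of_lt (mul_pos hε (hg_pos ε hε))
    · filter_upwards [self_mem_nhdsWithin,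
        Ioc_mem_nhdsGT_of_mem (Set.left_mem_Ico.2 one_pos)] with ε hε hε1
      exact small ε hε hε1.2
    · exact hpow
  -- main argument
  intro r hr
  set t := ginv r with htdef
  have ht : 0 < t := ginv_pos r hr
  have hgt : g t = r := hginv_right r hr
  -- integral identity
  have Ieq : (∫ ρ in (0:ℝ)..r, ginv ρ) = Φ r := by
    apply intervalIntegral.integral_congr_ae
    apply MeasureTheory.ae_of_all
    intro x hx
    rw [Set.uIoc_of_le (le_of_lt hr)] at hx
    rw [h_eq x hx.1]
  -- ψ and φ are ≥ 0 at t
  have bound : ∀ F : ℝ → ℝ, MonotoneOn F (Set.Ioi 0) →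
      (∀ ε : ℝ, 0 < ε → ε ≤ 1 → -((2 * g₁) * (ε * g ε)) ≤ F ε) → 0 ≤ F t := by
    intro F hF hFb
    have hlim : Filter.Tendsto (fun ε : ℝ => -((2 * g₁) * (ε * g ε)))
        (nhdsWithin 0 (Set.Ioi 0)) (nhds 0) := by
      have := (tendsto_small.const_mul (2 * g₁)).neg
      rwa [mul_zero, neg_zero] at this
    refine le_of_tendsto hlim ?_
    filter_upwards [Ioc_mem_nhdsGT_of_mem
      (Set.left_mem_Ico.2 (lt_min ht one_pos))] with ε hε
    have hε0 : 0 < ε := hε.1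
    have hεt : ε ≤ t := le_trans hε.2 (min_le_left _ _)
    have hε1 : ε ≤ 1 := le_trans hε.2 (min_le_right _ _)
    calc -((2 * g₁) * (ε * g ε)) ≤ F ε := hFb ε hε0 hε1
      _ ≤ F t := hF (Set.mem_Ioi.2 hε0) (Set.mem_Ioi.2 ht) hεt
  have Φgε_bound : ∀ ε : ℝ, 0 < ε → Φ (g ε) ≤ ε * g ε ∧ 0 ≤ Φ (g ε) := by
    intro ε hε
    have hgε : 0 < g ε := hg_pos ε hε
    constructor
    · have := Φ_le (g ε) (le_of_lt hgε)
      rwa [h_eq (g ε) hgε, hginv_left ε hε, mul_comm] at this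
    · exact Φ_nonneg (g ε) (le_of_lt hgε)
  have ψt : 0 ≤ (g₁ - 1) * (t * g t) - g₁ * Φ (g t) := by
    apply bound _ ψmono
    intro ε hε0 hε1
    have h1 := (Φgε_bound ε hε0).1
    have h2 := (Φgε_bound ε hε0).2
    have h3 : 0 ≤ ε * g ε := le_of_lt (mul_pos hε0 (hg_pos ε hε0))
    nlinarith
  have φt : 0 ≤ g₀ * Φ (g t) - (g₀ - 1) * (t * g t) := by
    apply bound _ φmono
    intro ε hε0 hε1
    have h1 := (Φgε_bound ε hε0).1
    have h2 := (Φgε_bound ε hε0).2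
    have h3 : 0 ≤ ε * g ε := le_of_lt (mul_pos hε0 (hg_pos ε hε0))
    nlinarith
  rw [hgt] at ψt φt
  rw [Ieq]
  have hg₁1 : (0:ℝ) < g₁ - 1 := by linarith
  have hg₀1 : (0:ℝ) < g₀ - 1 := by linarith
  constructor
  · rw [div_mul_eq_mul_div, div_le_iff₀ hg₁1]
    nlinarith
  · rw [div_mul_eq_mul_div, le_div_iff₀ hg₀1]
    nlinarith
end

section
/- Let 𝒜 : ℝⁿ → ℝⁿ be continuous with 𝒜(0) = 0, C¹ on ℝⁿ∖{0}, and suppose ⟨D𝒜(ξ)λ, λ⟩ ≥ ν·(g(|ξ|)/|ξ|)·|λ|² for every ξ ∈ ℝⁿ∖{0} and every λ ∈ ℝⁿ, where 0 < ν ≤ 1. Then there exists a constant c > 0 depending only on g₀, g₁, ν such that ⟨𝒜(ξ), ξ⟩ ≥ c·G(|ξ|) for every ξ ∈ ℝⁿ. -/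
/-!
Take `c = ν`. Along the ray `t ↦ t • ξ`, `t ∈ [0, 1]`, the derivative of `⟪𝒜(t • ξ), ξ⟫` is
`⟪D𝒜(t • ξ) ξ, ξ⟫ ≥ ν g(t|ξ|)/(t|ξ|) |ξ|² ≥ ν g(t|ξ|) |ξ|`, whose integral over `[0, 1]` is
`ν G(|ξ|)`. Since `s g'(s)/g(s) ≥ g₀ - 1 > 0`, `g` is positive and increasing, hence integrable
near `0`.
-/

open MeasureTheory Set intervalIntegral

theorem MonotoneOn.intervalIntegrable_zero_of_nonneg {g : ℝ → ℝ} {b : ℝ}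
    (hmono : MonotoneOn g (Ioi 0)) (hg : ∀ s, 0 < s → 0 ≤ g s) (hb : 0 ≤ b) :
    IntervalIntegrable g volume 0 b := by
  -- `g 0` is arbitrary; setting it to `0` makes `g` monotone on the closed interval.
  have hmono₀ : MonotoneOn (Function.update g 0 0) (Icc 0 b) := by
    intro x hx y hy hxy
    rcases hx.1.eq_or_lt with rfl | hx₀
    · rcases hy.1.eq_or_lt with rfl | hy₀
      · rfl
      · simpa [hy₀.ne'] using hg y hy₀
    · simpa [hx₀.ne', (hx₀.trans_le hxy).ne'] using hmono hx₀ (hx₀.trans_le hxy) hxy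
  rw [intervalIntegrable_iff_integrableOn_Ioc_of_le hb]
  refine ((hmono₀.integrableOn_isCompact isCompact_Icc).mono_set Ioc_subset_Icc_self).congr_fun
    (fun x hx => ?_) measurableSet_Ioc
  simp [hx.1.ne']

section InnerProductSpace

variable {E : Type*} [NormedAddCommGroup E] [InnerProductSpace ℝ E]

theorem hasDerivAt_inner_apply_smul_self {A : E → E} {A' : E →L[ℝ] E} {ξ : E} {t : ℝ}
    (hA : HasFDerivAt A A' (t • ξ)) :
    HasDerivAt (fun s : ℝ => inner ℝ (A (s • ξ)) ξ) (inner ℝ (A' ξ) ξ) t := by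
  have hray : HasDerivAt (fun s : ℝ => s • ξ) ξ t := by
    simpa using (hasDerivAt_id t).smul_const ξ
  simpa using (hA.comp_hasDerivAt t hray).inner ℝ (hasDerivAt_const t ξ)

theorem mul_le_inner_apply_smul_self {DA : E → E →L[ℝ] E} {g : ℝ → ℝ} {ν : ℝ} (hν : 0 ≤ ν)
    (hg : ∀ s, 0 < s → 0 ≤ g s)
    (hell : ∀ ξ, ξ ≠ 0 → ∀ v : E, ν * (g ‖ξ‖ / ‖ξ‖) * ‖v‖ ^ 2 ≤ inner ℝ (DA ξ v) v)
    {ξ : E} (hξ : ξ ≠ 0) {t : ℝ} (ht₀ : 0 < t) (ht₁ : t ≤ 1) :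
    ν * (g (t * ‖ξ‖) * ‖ξ‖) ≤ inner ℝ (DA (t • ξ) ξ) ξ := by
  have hr : 0 < ‖ξ‖ := norm_pos_iff.mpr hξ
  have hnorm : ‖t • ξ‖ = t * ‖ξ‖ := by rw [norm_smul, Real.norm_of_nonneg ht₀.le]
  have hgt := hg _ (mul_pos ht₀ hr)
  calc ν * (g (t * ‖ξ‖) * ‖ξ‖) ≤ ν * (g (t * ‖ξ‖) * ‖ξ‖) / t :=
        le_div_self (by positivity) ht₀ ht₁
    _ = ν * (g (t * ‖ξ‖) / (t * ‖ξ‖)) * ‖ξ‖ ^ 2 := by field_simp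
    _ ≤ inner ℝ (DA (t • ξ) ξ) ξ := hnorm ▸ hell _ (smul_ne_zero ht₀.ne' hξ) ξ

theorem mul_integral_le_inner_apply_self {A : E → E} {DA : E → E →L[ℝ] E} {g : ℝ → ℝ} {ν : ℝ}
    (hA : ContinuousAt A 0) (hA₀ : A 0 = 0) (hDA : ∀ ξ, ξ ≠ 0 → HasFDerivAt A (DA ξ) ξ)
    (hν : 0 ≤ ν) (hg : ∀ s, 0 < s → 0 ≤ g s)
    (hell : ∀ ξ, ξ ≠ 0 → ∀ v : E, ν * (g ‖ξ‖ / ‖ξ‖) * ‖v‖ ^ 2 ≤ inner ℝ (DA ξ v) v)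
    (ξ : E) (hint : IntervalIntegrable g volume 0 ‖ξ‖) :
    ν * ∫ ρ in (0 : ℝ)..‖ξ‖, g ρ ≤ inner ℝ (A ξ) ξ := by
  rcases eq_or_ne ξ 0 with rfl | hξ
  · simp [hA₀]
  have hr : 0 < ‖ξ‖ := norm_pos_iff.mpr hξ
  have hderiv : ∀ t : ℝ, 0 < t →
      HasDerivAt (fun s : ℝ => inner ℝ (A (s • ξ)) ξ) (inner ℝ (DA (t • ξ) ξ) ξ) t :=
    fun t ht => hasDerivAt_inner_apply_smul_self (hDA _ (smul_ne_zero ht.ne' hξ))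
  have hcont : ContinuousOn (fun s : ℝ => inner ℝ (A (s • ξ)) ξ) (Icc 0 1) := by
    intro t ht
    rcases ht.1.eq_or_lt with rfl | ht₀
    · have hray : ContinuousAt (fun s : ℝ => A (s • ξ)) 0 :=
        hA.comp_of_eq (continuous_id.smul continuous_const).continuousAt (zero_smul ℝ ξ)
      exact (hray.inner continuousAt_const).continuousWithinAt
    · exact (hderiv t ht₀).continuousAt.continuousWithinAt
  have hint₁ : IntegrableOn (fun t => ν * (g (t * ‖ξ‖) * ‖ξ‖)) (Icc 0 1) := by
    rw [← intervalIntegrable_iff_integrableOn_Icc_of_le zero_le_one]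
    have := hint.comp_mul_right (c := ‖ξ‖)
    rw [zero_div, div_self hr.ne'] at this
    exact (this.mul_const _).const_mul _
  have hftc := integral_le_sub_of_hasDeriv_right_of_le zero_le_one hcont
    (fun t ht => (hderiv t ht.1).hasDerivWithinAt) hint₁
    (fun t ht => mul_le_inner_apply_smul_self hν hg hell hξ ht.1 ht.2.le)
  have hrescale : ∫ t in (0 : ℝ)..1, ν * (g (t * ‖ξ‖) * ‖ξ‖) = ν * ∫ ρ in (0 : ℝ)..‖ξ‖, g ρ := by
    rw [intervalIntegral.integral_const_mul, intervalIntegral.integral_mul_const,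
      intervalIntegral.integral_comp_mul_right _ hr.ne', zero_mul, one_mul, smul_eq_mul]
    field_simp
  simpa [hrescale, hA₀] using hftc

end InnerProductSpace

theorem stmt_11_general (g₀ g₁ ν : ℝ) (hg₀ : 1 < g₀) (hν : 0 < ν) :
    ∃ c : ℝ, 0 < c ∧
      ∀ (n : ℕ), 2 ≤ n →
      ∀ (g g' : ℝ → ℝ),
        (∀ s : ℝ, 0 < s → 0 < g s) →
        (∀ s : ℝ, 0 < s → HasDerivAt g (g' s) s) →
        ContinuousOn g' (Set.Ioi 0) →
        (∀ s : ℝ, 0 < s → g₀ - 1 ≤ s * g' s / g s ∧ s * g' s / g s ≤ g₁ - 1) →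
      ∀ (𝒜 : EuclideanSpace ℝ (Fin n) → EuclideanSpace ℝ (Fin n))
        (DA : EuclideanSpace ℝ (Fin n) →
          (EuclideanSpace ℝ (Fin n) →L[ℝ] EuclideanSpace ℝ (Fin n))),
        Continuous 𝒜 → 𝒜 0 = 0 →
        (∀ ξ, ξ ≠ 0 → HasFDerivAt 𝒜 (DA ξ) ξ) →
        ContinuousOn DA {(0 : EuclideanSpace ℝ (Fin n))}ᶜ →
        (∀ ξ, ξ ≠ 0 → ∀ lam : EuclideanSpace ℝ (Fin n),
          ν * (g ‖ξ‖ / ‖ξ‖) * ‖lam‖ ^ 2 ≤ (inner ℝ (DA ξ lam) lam : ℝ)) →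
        ∀ ξ : EuclideanSpace ℝ (Fin n),
          c * (∫ ρ in (0:ℝ)..‖ξ‖, g ρ) ≤ (inner ℝ (𝒜 ξ) ξ : ℝ) := by
  refine ⟨ν, hν, fun n _ g g' hg hg' _ hgg' 𝒜 DA h𝒜 h𝒜₀ hDA _ hell ξ => ?_⟩
  have hg'_nonneg : ∀ s, 0 < s → 0 ≤ g' s := fun s hs => by
    have h := mul_nonneg ((sub_pos.2 hg₀).le.trans (hgg' s hs).1) (hg s hs).le
    rw [div_mul_cancel₀ _ (hg s hs).ne'] at h
    exact nonneg_of_mul_nonneg_right h hs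
  have hmono : MonotoneOn g (Ioi 0) := by
    refine monotoneOn_of_hasDerivWithinAt_nonneg (f' := g') (convex_Ioi 0)
      (fun s hs => (hg' s hs).continuousAt.continuousWithinAt) (fun s hs => ?_) (fun s hs => ?_)
    · rw [interior_Ioi] at hs ⊢
      exact (hg' s hs).hasDerivWithinAt
    · exact hg'_nonneg s (interior_subset hs)
  have hg_nonneg : ∀ s, 0 < s → 0 ≤ g s := fun s hs => (hg s hs).le
  exact mul_integral_le_inner_apply_self h𝒜.continuousAt h𝒜₀ hDA hν.le hg_nonneg hell ξ
    (hmono.intervalIntegrable_zero_of_nonneg hg_nonneg (norm_nonneg ξ))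

/-- Coercivity of a vector field with `g`-ellipticity: if `⟨D𝒜(ξ)λ, λ⟩ ≥ ν g(|ξ|)/|ξ| |λ|²`
off the origin and `𝒜(0) = 0`, then `⟨𝒜(ξ), ξ⟩ ≥ c G(|ξ|)` with `c = c(g₀, g₁, ν) > 0`. -/
theorem stmt_11 (g₀ g₁ ν : ℝ) (hg₀ : 1 < g₀) (hg₀₁ : g₀ ≤ g₁) (hν : 0 < ν) (hν1 : ν ≤ 1) :
    ∃ c : ℝ, 0 < c ∧
      ∀ (n : ℕ), 2 ≤ n →
      ∀ (g g' : ℝ → ℝ),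
        (∀ s : ℝ, 0 < s → 0 < g s) →
        (∀ s : ℝ, 0 < s → HasDerivAt g (g' s) s) →
        ContinuousOn g' (Set.Ioi 0) →
        (∀ s : ℝ, 0 < s → g₀ - 1 ≤ s * g' s / g s ∧ s * g' s / g s ≤ g₁ - 1) →
      ∀ (𝒜 : EuclideanSpace ℝ (Fin n) → EuclideanSpace ℝ (Fin n))
        (DA : EuclideanSpace ℝ (Fin n) →
          (EuclideanSpace ℝ (Fin n) →L[ℝ] EuclideanSpace ℝ (Fin n))),
        Continuous 𝒜 → 𝒜 0 = 0 →
        (∀ ξ, ξ ≠ 0 → HasFDerivAt 𝒜 (DA ξ) ξ) →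
        ContinuousOn DA {(0 : EuclideanSpace ℝ (Fin n))}ᶜ →
        (∀ ξ, ξ ≠ 0 → ∀ lam : EuclideanSpace ℝ (Fin n),
          ν * (g ‖ξ‖ / ‖ξ‖) * ‖lam‖ ^ 2 ≤ (inner ℝ (DA ξ lam) lam : ℝ)) →
        ∀ ξ : EuclideanSpace ℝ (Fin n),
          c * (∫ ρ in (0:ℝ)..‖ξ‖, g ρ) ≤ (inner ℝ (𝒜 ξ) ξ : ℝ) :=
  stmt_11_general g₀ g₁ ν hg₀ hν
end

section
/- For ε ∈ (0, 1) and g̃₁ > max{g₁, 2} define g_ε(s) := (g(s + ε)/(s + ε))·s + ε·(1 + s)^{g̃₁ − 2}·s for s > 0, and set g̃₀ := min{g₀, 2}. Then g_ε satisfies g̃₀ − 1 ≤ s·g_ε′(s)/g_ε(s) ≤ g̃₁ − 1 for every s > 0; in particular the bounds are independent of ε. -/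
/-!
Write `elasticity f s = s f'(s) / f(s)`. It is additive over products and quotients, the shift
`x ↦ x + a` multiplies it by `s / (s + a)`, and the elasticity of a sum of two positive functions
is a convex combination of theirs. With `t = s / (s + ε) ∈ [0, 1]`, the first summand of `g_ε`
has elasticity `t · e_g(s + ε) + (1 - t)`, which lies between `min (g₀ - 1) 1` and
`max (g₁ - 1) 1`; the second has elasticity `1 + (g̃₁ - 2) s / (1 + s) ∈ [1, g̃₁ - 1]`.
Both intervals lie in `[g̃₀ - 1, g̃₁ - 1]`, hence so does the elasticity of `g_ε`.
-/

/-- The regularized structure function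
`g_ε(s) = (g(s+ε)/(s+ε)) s + ε (1+s)^{g̃₁−2} s`. -/
noncomputable def geps (g : ℝ → ℝ) (ε tg₁ : ℝ) (s : ℝ) : ℝ :=
  g (s + ε) / (s + ε) * s + ε * (1 + s) ^ (tg₁ - 2) * s

open Set

noncomputable def elasticity (f : ℝ → ℝ) (s : ℝ) : ℝ := s * deriv f s / f s

section Elasticity

variable {f h : ℝ → ℝ} {s : ℝ}

@[simp]
lemma elasticity_const (c : ℝ) : elasticity (fun _ => c) s = 0 := by
  simp [elasticity]

lemma elasticity_id' (hs : s ≠ 0) : elasticity (fun x => x) s = 1 := by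
  simp [elasticity, hs]

lemma elasticity_mul (hf : DifferentiableAt ℝ f s) (hh : DifferentiableAt ℝ h s)
    (hf0 : f s ≠ 0) (hh0 : h s ≠ 0) :
    elasticity (fun x => f x * h x) s = elasticity f s + elasticity h s := by
  rw [elasticity, elasticity, elasticity, deriv_fun_mul hf hh]
  field_simp

lemma elasticity_div (hf : DifferentiableAt ℝ f s) (hh : DifferentiableAt ℝ h s)
    (hf0 : f s ≠ 0) (hh0 : h s ≠ 0) :
    elasticity (fun x => f x / h x) s = elasticity f s - elasticity h s := by
  rw [elasticity, elasticity, elasticity, deriv_fun_div hf hh hh0]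
  field_simp

lemma elasticity_comp_add_const (f : ℝ → ℝ) (a : ℝ) (hsa : s + a ≠ 0) :
    elasticity (fun x => f (x + a)) s = s / (s + a) * elasticity f (s + a) := by
  simp only [elasticity, deriv_comp_add_const]
  field_simp

lemma elasticity_rpow_const (p : ℝ) (hs : 0 < s) : elasticity (fun x => x ^ p) s = p := by
  have hsp : s ^ p ≠ 0 := (Real.rpow_pos_of_pos hs p).ne'
  simp only [elasticity, Real.deriv_rpow_const, Real.rpow_sub_one hs.ne']
  field_simp

lemma elasticity_add_mem_Icc {lo hi : ℝ} (hf : DifferentiableAt ℝ f s)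
    (hh : DifferentiableAt ℝ h s) (hf0 : 0 < f s) (hh0 : 0 < h s)
    (hfe : elasticity f s ∈ Icc lo hi) (hhe : elasticity h s ∈ Icc lo hi) :
    elasticity (fun x => f x + h x) s ∈ Icc lo hi := by
  simp only [elasticity, mem_Icc, le_div_iff₀ hf0, div_le_iff₀ hf0, le_div_iff₀ hh0,
    div_le_iff₀ hh0] at hfe hhe
  rw [elasticity, deriv_fun_add hf hh]
  simp only [mem_Icc, le_div_iff₀ (add_pos hf0 hh0),
    div_le_iff₀ (add_pos hf0 hh0)]
  constructor <;> linarith [hfe.1, hfe.2, hhe.1, hhe.2]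

end Elasticity

lemma elasticity_comp_add_const_div_mul_mem_Icc {u : ℝ → ℝ} {ε s lo hi : ℝ} (hs : 0 < s)
    (hε : 0 ≤ ε) (hu : DifferentiableAt ℝ u (s + ε)) (hu0 : 0 < u (s + ε))
    (hue : elasticity u (s + ε) ∈ Icc lo hi) :
    elasticity (fun x => u (x + ε) / (x + ε) * x) s ∈ Icc (min lo 1) (max hi 1) := by
  have hsε : 0 < s + ε := by linarith
  have hshift : elasticity (fun x => x + ε) s = s / (s + ε) := by
    simpa [elasticity_id' hsε.ne'] using elasticity_comp_add_const (fun x : ℝ => x) ε hsε.ne'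
  have hquot : elasticity (fun x => u (x + ε) / (x + ε)) s =
      s / (s + ε) * elasticity u (s + ε) - s / (s + ε) := by
    rw [elasticity_div (f := fun x => u (x + ε)) (by fun_prop) (by fun_prop) hu0.ne' hsε.ne',
      hshift, elasticity_comp_add_const u ε hsε.ne']
  rw [elasticity_mul (f := fun x => u (x + ε) / (x + ε))
    (by fun_prop (disch := exact hsε.ne')) (by fun_prop) (div_pos hu0 hsε).ne' hs.ne', hquot,
    elasticity_id' hs.ne']
  have ht₀ : 0 ≤ s / (s + ε) := by positivity
  have ht₁ : s / (s + ε) ≤ 1 := (div_le_one hsε).2 (by linarith)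
  obtain ⟨hlo, hhi⟩ := hue
  constructor
  · nlinarith [min_le_left lo 1, min_le_right lo 1]
  · nlinarith [le_max_left hi 1, le_max_right hi 1]

lemma elasticity_const_mul_one_add_rpow_mul_mem_Icc {c p s : ℝ} (hc : c ≠ 0) (hp : 0 ≤ p)
    (hs : 0 < s) : elasticity (fun x => c * (1 + x) ^ p * x) s ∈ Icc 1 (p + 1) := by
  have h1s : 0 < 1 + s := by linarith
  have hpow : elasticity (fun x => (1 + x) ^ p) s = s / (s + 1) * p := by
    simp_rw [add_comm (1 : ℝ)]
    rw [elasticity_comp_add_const (fun x => x ^ p) 1 (by linarith),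
      elasticity_rpow_const p (by linarith)]
  have hpow_pos : 0 < (1 + s) ^ p := Real.rpow_pos_of_pos h1s p
  rw [elasticity_mul (f := fun x => c * (1 + x) ^ p) (by fun_prop (disch := positivity))
      (by fun_prop) (mul_ne_zero hc hpow_pos.ne') hs.ne',
    elasticity_mul (f := fun _ => c) (h := fun x => (1 + x) ^ p) (by fun_prop)
      (by fun_prop (disch := positivity)) hc hpow_pos.ne',
    elasticity_const, hpow, elasticity_id' hs.ne']
  have ht₀ : 0 ≤ s / (s + 1) := by positivity
  have ht₁ : s / (s + 1) ≤ 1 := (div_le_one (by linarith)).2 (by linarith)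
  constructor <;> nlinarith

theorem stmt_14_general (g₀ g₁ : ℝ)
    (g g' : ℝ → ℝ)
    (hg_pos : ∀ s : ℝ, 0 < s → 0 < g s)
    (hg_deriv : ∀ s : ℝ, 0 < s → HasDerivAt g (g' s) s)
    (hg_orlicz : ∀ s : ℝ, 0 < s → g₀ - 1 ≤ s * g' s / g s ∧ s * g' s / g s ≤ g₁ - 1)
    (ε tg₁ : ℝ) (hε : 0 < ε) (htg₁ : max g₁ 2 < tg₁) :
    ∀ s : ℝ, 0 < s →
      DifferentiableAt ℝ (geps g ε tg₁) s ∧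
      min g₀ 2 - 1 ≤ s * deriv (geps g ε tg₁) s / geps g ε tg₁ s ∧
      s * deriv (geps g ε tg₁) s / geps g ε tg₁ s ≤ tg₁ - 1 := by
  intro s hs
  have hsε : 0 < s + ε := by linarith
  have hgd : DifferentiableAt ℝ g (s + ε) := (hg_deriv _ hsε).differentiableAt
  have hg_el : elasticity g (s + ε) ∈ Icc (g₀ - 1) (g₁ - 1) := by
    rw [elasticity, (hg_deriv _ hsε).deriv]
    exact hg_orlicz _ hsε
  have hquot := elasticity_comp_add_const_div_mul_mem_Icc hs hε.le hgd (hg_pos _ hsε) hg_el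
  have hpow := elasticity_const_mul_one_add_rpow_mul_mem_Icc hε.ne'
    (sub_nonneg.2 (le_max_right g₁ 2 |>.trans htg₁.le)) hs
  have hdiff_quot : DifferentiableAt ℝ (fun x => g (x + ε) / (x + ε) * x) s := by
    fun_prop (disch := exact hsε.ne')
  have hdiff_pow : DifferentiableAt ℝ (fun x => ε * (1 + x) ^ (tg₁ - 2) * x) s := by
    fun_prop (disch := positivity)
  have hmin : min g₀ 2 - 1 = min (g₀ - 1) 1 := by rw [← min_sub_sub_right]; norm_num
  refine ⟨hdiff_quot.add hdiff_pow, elasticity_add_mem_Icc hdiff_quot hdiff_pow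
    (mul_pos (div_pos (hg_pos _ hsε) hsε) hs) (by positivity) ?_ ?_⟩
  · refine Icc_subset_Icc hmin.le (max_le ?_ ?_) hquot <;>
      linarith [le_max_left g₁ 2, le_max_right g₁ 2]
  · exact Icc_subset_Icc (hmin ▸ min_le_right _ _) (by linarith) hpow

/-- The regularized function `g_ε` satisfies the Orlicz-type condition
`g̃₀ − 1 ≤ s g_ε'(s)/g_ε(s) ≤ g̃₁ − 1` for every `s > 0`, where `g̃₀ := min{g₀, 2}`;
in particular the bounds are independent of `ε`. -/
theorem stmt_14 (g₀ g₁ : ℝ) (hg₀ : 1 < g₀) (hg₀₁ : g₀ ≤ g₁)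
    (g g' : ℝ → ℝ)
    (hg_pos : ∀ s : ℝ, 0 < s → 0 < g s)
    (hg_deriv : ∀ s : ℝ, 0 < s → HasDerivAt g (g' s) s)
    (hg'_cont : ContinuousOn g' (Set.Ioi 0))
    (hg_orlicz : ∀ s : ℝ, 0 < s → g₀ - 1 ≤ s * g' s / g s ∧ s * g' s / g s ≤ g₁ - 1)
    (ε tg₁ : ℝ) (hε : 0 < ε) (hε1 : ε < 1) (htg₁ : max g₁ 2 < tg₁) :
    ∀ s : ℝ, 0 < s →
      DifferentiableAt ℝ (geps g ε tg₁) s ∧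
      min g₀ 2 - 1 ≤ s * deriv (geps g ε tg₁) s / geps g ε tg₁ s ∧
      s * deriv (geps g ε tg₁) s / geps g ε tg₁ s ≤ tg₁ - 1 :=
  stmt_14_general g₀ g₁ g g' hg_pos hg_deriv hg_orlicz ε tg₁ hε htg₁
end

section
/- For ε ∈ (0, 1) and g̃₁ > max{g₁, 2} define g_ε(s) := (g(s + ε)/(s + ε))·s + ε·(1 + s)^{g̃₁ − 2}·s for s > 0. Then: (i) g_ε(s) ≥ g(s)/2 for every s ≥ 1; and (ii) ε·(1 + s)^{g̃₁ − 2} ≤ g_ε(s)/s ≤ (c(g₁)/ε)·(1 + s)^{g̃₁ − 2} for every s > 0, where c(g₁) is a constant depending only on g₁. -/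
open Set Real

section GrowthBounds

variable {g g' : ℝ → ℝ}

theorem monotoneOn_Ioi_of_hasDerivAt_nonneg (hg : ∀ t, 0 < t → HasDerivAt g (g' t) t)
    (hg' : ∀ t, 0 < t → 0 ≤ g' t) : MonotoneOn g (Ioi 0) :=
  monotoneOn_of_hasDerivWithinAt_nonneg (convex_Ioi 0)
    (fun t ht => (hg t ht).continuousAt.continuousWithinAt)
    (by rw [interior_Ioi]; exact fun t ht => (hg t ht).hasDerivWithinAt)
    (by rw [interior_Ioi]; exact hg')

theorem antitoneOn_mul_rpow_neg {a : ℝ} (hg : ∀ t, 0 < t → HasDerivAt g (g' t) t)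
    (hgrowth : ∀ t, 0 < t → t * g' t ≤ a * g t) :
    AntitoneOn (fun t => g t * t ^ (-a)) (Ioi 0) := by
  have hderiv : ∀ t, 0 < t → HasDerivAt (fun t => g t * t ^ (-a))
      (g' t * t ^ (-a) + g t * (-a * t ^ (-a - 1))) t := fun t ht =>
    (hg t ht).mul (hasDerivAt_rpow_const (Or.inl ht.ne'))
  refine antitoneOn_of_hasDerivWithinAt_nonpos (convex_Ioi 0)
    (fun t ht => (hderiv t ht).continuousAt.continuousWithinAt)
    (by rw [interior_Ioi]; exact fun t ht => (hderiv t ht).hasDerivWithinAt) ?_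
  simp only [interior_Ioi, mem_Ioi]
  intro t ht
  have hsplit : t ^ (-a) = t ^ (-a - 1) * t := by
    rw [← rpow_add_one ht.ne', sub_add_cancel]
  calc g' t * t ^ (-a) + g t * (-a * t ^ (-a - 1))
      = t ^ (-a - 1) * (t * g' t - a * g t) := by rw [hsplit]; ring
    _ ≤ 0 := mul_nonpos_of_nonneg_of_nonpos (rpow_nonneg ht.le _)
        (sub_nonpos.2 (hgrowth t ht))

theorem mul_rpow_le_mul_rpow_of_antitoneOn {a s t : ℝ}
    (hanti : AntitoneOn (fun t => g t * t ^ (-a)) (Ioi 0)) (hs : 0 < s) (hst : s ≤ t) :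
    g t * s ^ a ≤ g s * t ^ a := by
  have ht : 0 < t := hs.trans_le hst
  have key := hanti hs ht hst
  simp only [rpow_neg hs.le, rpow_neg ht.le, ← div_eq_mul_inv] at key
  rwa [div_le_div_iff₀ (rpow_pos_of_pos ht a) (rpow_pos_of_pos hs a)] at key

theorem le_add_one_of_intervalIntegral_eq_one {a c : ℝ} (ha : -1 < a)
    (hlow : ∀ t ∈ Ioc (0 : ℝ) 1, c * t ^ a ≤ g t) (hint : ∫ t in (0 : ℝ)..1, g t = 1) :
    c ≤ a + 1 := by
  have hmono : ∫ t in (0 : ℝ)..1, c * t ^ a ≤ ∫ t in (0 : ℝ)..1, g t :=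
    intervalIntegral.integral_mono_on_of_le_Ioo zero_le_one
      ((intervalIntegral.intervalIntegrable_rpow' ha).const_mul c)
      (intervalIntegral.intervalIntegrable_of_integral_ne_zero (by rw [hint]; exact one_ne_zero))
      (fun t ht => hlow t (Ioo_subset_Ioc_self ht))
  rw [hint, intervalIntegral.integral_const_mul, integral_rpow (Or.inl ha),
    zero_rpow (by linarith), one_rpow, sub_zero, ← div_eq_mul_one_div,
    div_le_one (by linarith)] at hmono
  exact hmono

theorem le_mul_max_one_rpow {a C t : ℝ} (hmono : MonotoneOn g (Ioi 0))
    (hanti : AntitoneOn (fun t => g t * t ^ (-a)) (Ioi 0)) (hg1 : g 1 ≤ C) (ht : 0 < t) :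
    g t ≤ C * max 1 t ^ a := by
  rcases le_total t 1 with ht1 | ht1
  · rw [max_eq_left ht1, one_rpow, mul_one]
    exact (hmono ht (mem_Ioi.2 one_pos) ht1).trans hg1
  · rw [max_eq_right ht1]
    calc g t = g t * 1 ^ a := by rw [one_rpow, mul_one]
      _ ≤ g 1 * t ^ a := mul_rpow_le_mul_rpow_of_antitoneOn hanti one_pos ht1
      _ ≤ C * t ^ a := mul_le_mul_of_nonneg_right hg1 (rpow_nonneg ht.le a)

end GrowthBounds

theorem max_one_rpow_div_le {a ε t : ℝ} (hε : 0 < ε) (hε1 : ε ≤ 1) (ht : ε ≤ t) :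
    max 1 t ^ a / t ≤ max 1 t ^ (a - 1) / ε := by
  have ht0 : 0 < t := hε.trans_le ht
  have hm : 0 < max 1 t := one_pos.trans_le (le_max_left 1 t)
  have hmt : max 1 t * ε ≤ t := by
    rcases le_total t 1 with ht1 | ht1
    · rw [max_eq_left ht1, one_mul]; exact ht
    · rw [max_eq_right ht1]; exact mul_le_of_le_one_right ht0.le hε1
  rw [div_le_div_iff₀ ht0 hε, ← sub_add_cancel a 1, rpow_add_one hm.ne', add_sub_cancel_right,
    mul_assoc]
  exact mul_le_mul_of_nonneg_left hmt (rpow_nonneg hm.le _)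

theorem rpow_le_rpow_of_one_le_of_exponent_le {b B p q : ℝ} (hb : 1 ≤ b) (hbB : b ≤ B)
    (hpq : p ≤ q) (hq : 0 ≤ q) : b ^ p ≤ B ^ q :=
  (rpow_le_rpow_of_exponent_le hb hpq).trans (rpow_le_rpow (zero_le_one.trans hb) hbB hq)

section Regularization

variable {g : ℝ → ℝ} {ε tg₁ s : ℝ}

theorem geps_div_self (hs : s ≠ 0) :
    geps g ε tg₁ s / s = g (s + ε) / (s + ε) + ε * (1 + s) ^ (tg₁ - 2) := by
  unfold geps
  field_simp

theorem half_le_geps (hmono : MonotoneOn g (Ioi 0)) (hpos : ∀ t, 0 < t → 0 < g t)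
    (hε : 0 ≤ ε) (hεs : ε ≤ s) (hs : 0 < s) : g s / 2 ≤ geps g ε tg₁ s := by
  have hse : 0 < s + ε := by linarith
  have hgs : g s ≤ g (s + ε) := hmono hs hse (by linarith)
  have hmain : g s / 2 ≤ g (s + ε) / (s + ε) * s := by
    rw [div_mul_eq_mul_div, le_div_iff₀ hse]
    nlinarith [hpos s hs]
  have hrest : 0 ≤ ε * (1 + s) ^ (tg₁ - 2) * s := by
    have := rpow_nonneg (by linarith : (0 : ℝ) ≤ 1 + s) (tg₁ - 2)
    positivity
  unfold geps
  linarith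

theorem le_geps_div_self (hg : 0 ≤ g (s + ε)) (hε : 0 ≤ ε) (hs : 0 < s) :
    ε * (1 + s) ^ (tg₁ - 2) ≤ geps g ε tg₁ s / s := by
  rw [geps_div_self hs.ne']
  exact le_add_of_nonneg_left (div_nonneg hg (by linarith))

theorem geps_div_self_le {a C : ℝ} (hbound : g (s + ε) ≤ C * max 1 (s + ε) ^ a) (hC : 0 ≤ C)
    (hε : 0 < ε) (hε1 : ε ≤ 1) (hs : 0 < s) (ha : a - 1 ≤ tg₁ - 2) (htg₁ : 2 ≤ tg₁) :
    geps g ε tg₁ s / s ≤ (C + 1) / ε * (1 + s) ^ (tg₁ - 2) := by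
  have hse : 0 < s + ε := by linarith
  have hP : 0 ≤ (1 + s) ^ (tg₁ - 2) := rpow_nonneg (by linarith) _
  have hratio : g (s + ε) / (s + ε) ≤ C / ε * (1 + s) ^ (tg₁ - 2) :=
    calc g (s + ε) / (s + ε) ≤ C * max 1 (s + ε) ^ a / (s + ε) :=
          div_le_div_of_nonneg_right hbound hse.le
      _ ≤ C * (max 1 (s + ε) ^ (a - 1) / ε) := by
          rw [mul_div_assoc]
          exact mul_le_mul_of_nonneg_left (max_one_rpow_div_le hε hε1 (by linarith)) hC
      _ ≤ C / ε * (1 + s) ^ (tg₁ - 2) := by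
          rw [mul_div_assoc', div_mul_eq_mul_div]
          gcongr
          exact rpow_le_rpow_of_one_le_of_exponent_le (le_max_left _ _)
            (max_le (by linarith) (by linarith)) ha (by linarith)
  have hεP : ε * (1 + s) ^ (tg₁ - 2) ≤ 1 / ε * (1 + s) ^ (tg₁ - 2) := by
    gcongr
    rw [le_div_iff₀ hε]
    nlinarith
  rw [geps_div_self hs.ne', add_div, add_mul]
  linarith

end Regularization

/-- (i) `g_ε(s) ≥ g(s)/2` for `s ≥ 1`; (ii) `ε (1+s)^{g̃₁−2} ≤ g_ε(s)/s ≤ (c(g₁)/ε)(1+s)^{g̃₁−2}`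
for `s > 0`, with `c(g₁)` depending only on `g₁`. -/
theorem stmt_15 (g₁ : ℝ) :
    ∃ c : ℝ, 0 < c ∧
      ∀ (g₀ : ℝ), 1 < g₀ → g₀ ≤ g₁ →
      ∀ (g g' : ℝ → ℝ),
        (∀ s : ℝ, 0 < s → 0 < g s) →
        (∀ s : ℝ, 0 < s → HasDerivAt g (g' s) s) →
        ContinuousOn g' (Set.Ioi 0) →
        (∀ s : ℝ, 0 < s → g₀ - 1 ≤ s * g' s / g s ∧ s * g' s / g s ≤ g₁ - 1) →
        (∫ ρ in (0:ℝ)..1, g ρ) = 1 →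
      ∀ ε : ℝ, 0 < ε → ε < 1 → ∀ tg₁ : ℝ, max g₁ 2 < tg₁ →
        (∀ s : ℝ, 1 ≤ s → g s / 2 ≤ geps g ε tg₁ s) ∧
        (∀ s : ℝ, 0 < s →
          ε * (1 + s) ^ (tg₁ - 2) ≤ geps g ε tg₁ s / s ∧
          geps g ε tg₁ s / s ≤ c / ε * (1 + s) ^ (tg₁ - 2)) := by
  refine ⟨|g₁| + 1, by positivity, ?_⟩
  intro g₀ hg₀ hg₀₁ g g' hgpos hgderiv _ hgrowth hgint ε hε hε1 tg₁ htg₁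
  have hmono : MonotoneOn g (Ioi 0) := monotoneOn_Ioi_of_hasDerivAt_nonneg hgderiv fun t ht => by
    have hlow := (le_div_iff₀ (hgpos t ht)).1 (hgrowth t ht).1
    exact nonneg_of_mul_nonneg_right (by nlinarith [hgpos t ht]) ht
  have hanti := antitoneOn_mul_rpow_neg (a := g₁ - 1) hgderiv fun t ht =>
    (div_le_iff₀ (hgpos t ht)).1 (hgrowth t ht).2
  have hg1 : g 1 ≤ g₁ := by
    simpa using le_add_one_of_intervalIntegral_eq_one (a := g₁ - 1) (by linarith)
      (fun t ht => by simpa using mul_rpow_le_mul_rpow_of_antitoneOn hanti ht.1 ht.2) hgint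
  have hbound : ∀ t, 0 < t → g t ≤ g₁ * max 1 t ^ (g₁ - 1) := fun t ht =>
    le_mul_max_one_rpow hmono hanti hg1 ht
  refine ⟨fun s hs => half_le_geps hmono hgpos hε.le (by linarith) (by linarith),
    fun s hs => ⟨le_geps_div_self (hgpos _ (by linarith)).le hε.le hs, ?_⟩⟩
  calc geps g ε tg₁ s / s ≤ (g₁ + 1) / ε * (1 + s) ^ (tg₁ - 2) :=
        geps_div_self_le (hbound _ (by linarith)) (by linarith) hε hε1.le hs
          (by linarith [le_max_left g₁ 2]) (by linarith [le_max_right g₁ 2])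
    _ ≤ (|g₁| + 1) / ε * (1 + s) ^ (tg₁ - 2) := by gcongr; exact le_abs_self g₁
end

section
/- Let φ ∈ C_c^∞(ℝⁿ) be a standard mollifier: φ ≥ 0, supp φ ⊂ B₁(0), ∫_{ℝⁿ} φ dx = 1, with sup_{B₁(0)} φ ≤ c₀ and inf_{B_{1/2}(0)} φ ≥ 1/c₀ for some c₀ ≥ 1. Then there exists a constant c ≥ 1 depending only on n, g₀, g₁ and c₀ such that for every ε ∈ (0, 1) and every ξ ∈ ℝⁿ: c⁻¹·g(|ξ| + ε)/(|ξ| + ε) ≤ ∫_{B₁(0)} (g(|ξ − εη|)/|ξ − εη|)·φ(η) dη ≤ c·g(|ξ| + ε)/(|ξ| + ε). -/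
open MeasureTheory


set_option maxHeartbeats 2000000

open Metric Set

section AuxStmt16

lemma g_mono {g₀ g₁ : ℝ} (hg₀ : 1 < g₀) {g g' : ℝ → ℝ}
    (hgpos : ∀ s : ℝ, 0 < s → 0 < g s)
    (hg' : ∀ s : ℝ, 0 < s → HasDerivAt g (g' s) s)
    (hb : ∀ s : ℝ, 0 < s → g₀ - 1 ≤ s * g' s / g s ∧ s * g' s / g s ≤ g₁ - 1) :
    MonotoneOn g (Set.Ioi 0) := by
  apply monotoneOn_of_deriv_nonneg (convex_Ioi 0)
  · exact fun x hx => (hg' x hx).continuousAt.continuousWithinAt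
  · rw [interior_Ioi]
    exact fun x hx => (hg' x hx).differentiableAt.differentiableWithinAt
  · rw [interior_Ioi]
    intro x hx
    rw [(hg' x hx).deriv]
    have h1 := (hb x hx).1
    have hg := hgpos x hx
    have hx0 : (0:ℝ) < x := hx
    have h1' : (g₀ - 1) * g x ≤ x * g' x := (le_div_iff₀ (hgpos x hx)).mp h1
    nlinarith

lemma g_low {g₀ g₁ : ℝ} (hg₀ : 1 < g₀) (hg₀₁ : g₀ ≤ g₁) {g g' : ℝ → ℝ}
    (hgpos : ∀ s : ℝ, 0 < s → 0 < g s)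
    (hg' : ∀ s : ℝ, 0 < s → HasDerivAt g (g' s) s)
    (hb : ∀ s : ℝ, 0 < s → g₀ - 1 ≤ s * g' s / g s ∧ s * g' s / g s ≤ g₁ - 1) :
    ∀ s t : ℝ, 0 < s → s ≤ t → g t * (s / t) ^ (g₁ - 1) ≤ g s := by
  have hanti : AntitoneOn (fun s : ℝ => g s * s ^ (1 - g₁)) (Set.Ioi 0) := by
    apply antitoneOn_of_deriv_nonpos (convex_Ioi 0)
    · intro x hx
      exact ((hg' x hx).continuousAt.mul
        ((Real.hasDerivAt_rpow_const (Or.inl (ne_of_gt hx))).continuousAt)).continuousWithinAt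
    · rw [interior_Ioi]
      intro x hx
      exact ((hg' x hx).mul (Real.hasDerivAt_rpow_const
        (Or.inl (ne_of_gt hx)))).differentiableAt.differentiableWithinAt
    · rw [interior_Ioi]
      intro x hx
      have hd := (hg' x hx).mul (Real.hasDerivAt_rpow_const (p := 1 - g₁) (Or.inl (ne_of_gt hx)))
      rw [show (fun s : ℝ => g s * s ^ (1 - g₁)) = (g * fun x => x ^ (1 - g₁)) from rfl, hd.deriv]
      have h2 := (hb x hx).2
      have hg := hgpos x hx
      have hx0 : (0:ℝ) < x := hx
      have hxg : x * g' x ≤ (g₁ - 1) * g x := by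
        rw [div_le_iff₀ hg] at h2; linarith
      have e1 : x ^ (1 - g₁) = x * x ^ (1 - g₁ - 1) := by
        rw [← Real.rpow_one_add' hx0.le (by intro h; nlinarith)]
        ring_nf
      have hA : (0:ℝ) < x ^ (1 - g₁ - 1) := Real.rpow_pos_of_pos hx0 _
      rw [e1]
      nlinarith
  intro s t hs hst
  have ht : (0:ℝ) < t := lt_of_lt_of_le hs hst
  have h := hanti (Set.mem_Ioi.mpr hs) (Set.mem_Ioi.mpr ht) hst
  -- h : g t * t ^ (1 - g₁) ≤ g s * s ^ (1 - g₁)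
  have hspow : (0:ℝ) < s ^ (g₁ - 1) := Real.rpow_pos_of_pos hs _
  have key : (s / t) ^ (g₁ - 1) = s ^ (g₁ - 1) * t ^ (1 - g₁) := by
    rw [Real.div_rpow hs.le ht.le, div_eq_mul_inv, ← Real.rpow_neg ht.le]
    ring_nf
  rw [key]
  have h2 : g t * t ^ (1 - g₁) * s ^ (g₁ - 1) ≤ g s * s ^ (1 - g₁) * s ^ (g₁ - 1) := by
    exact mul_le_mul_of_nonneg_right h hspow.le
  have e2 : s ^ (1 - g₁) * s ^ (g₁ - 1) = 1 := by
    rw [← Real.rpow_add hs]; norm_num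
  calc g t * (s ^ (g₁ - 1) * t ^ (1 - g₁)) = g t * t ^ (1 - g₁) * s ^ (g₁ - 1) := by ring
    _ ≤ g s * s ^ (1 - g₁) * s ^ (g₁ - 1) := h2
    _ = g s := by rw [mul_assoc, e2, mul_one]

namespace AuxStmt16
variable {n : ℕ}

local notation "E" => EuclideanSpace ℝ (Fin n)

lemma integrableOn_inv_norm_ball3 (hn : 2 ≤ n) :
    IntegrableOn (fun z : E => ‖z‖⁻¹) (ball (0 : E) 3) volume := by
  haveI : Nonempty (Fin n) := ⟨⟨0, by omega⟩⟩
  haveI : Nontrivial E := by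
    refine ⟨0, EuclideanSpace.single ⟨0, by omega⟩ 1, ?_⟩
    intro h
    have := congrArg (fun v : E => v ⟨0, by omega⟩) h
    simp [EuclideanSpace.single_apply] at this
  constructor
  · exact (measurable_norm.inv).aestronglyMeasurable
  · rw [hasFiniteIntegral_iff_ofReal (ae_of_all _ fun z => inv_nonneg.mpr (norm_nonneg z))]
    set F : ℕ → E → ENNReal := fun k z =>
      (ball (0 : E) (3 * (2:ℝ)⁻¹ ^ k)).indicator (fun _ => ENNReal.ofReal (2 ^ (k+1) / 3)) z
    have hpt : ∀ z ∈ ball (0 : E) 3, ENNReal.ofReal ‖z‖⁻¹ ≤ ∑' k : ℕ, F k z := by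
      intro z hz
      rcases eq_or_ne z 0 with rfl | hz0
      · simp
      · have ht0 : (0:ℝ) < ‖z‖ := norm_pos_iff.mpr hz0
        have ht3 : ‖z‖ < 3 := by simpa using mem_ball_zero_iff.mp hz
        have hP : ∃ j : ℕ, (2:ℝ)⁻¹ ^ (j + 1) ≤ ‖z‖ / 3 := by
          obtain ⟨m, hm⟩ := exists_pow_lt_of_lt_one (by positivity : (0:ℝ) < ‖z‖ / 3)
            (by norm_num : (2:ℝ)⁻¹ < 1)
          exact ⟨m, le_of_lt (lt_of_le_of_lt (pow_le_pow_of_le_one (by norm_num)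
            (by norm_num) (by omega)) hm)⟩
        set k := Nat.find hP with hk
        have hk1 : (2:ℝ)⁻¹ ^ (k + 1) ≤ ‖z‖ / 3 := Nat.find_spec hP
        have hk2 : ‖z‖ / 3 < (2:ℝ)⁻¹ ^ k := by
          rcases Nat.eq_zero_or_pos k with h0 | hpos
          · rw [h0]; simpa using (by linarith : ‖z‖ / 3 < 1)
          · have := Nat.find_min hP (m := k - 1) (by omega)
            push_neg at this
            have : ‖z‖ / 3 < (2:ℝ)⁻¹ ^ (k - 1 + 1) := this
            simpa [Nat.sub_add_cancel hpos] using this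
        have hmem : z ∈ ball (0 : E) (3 * (2:ℝ)⁻¹ ^ k) := by
          rw [mem_ball_zero_iff]
          linarith [hk2, (by linarith : ‖z‖ < 3 * (2:ℝ)⁻¹ ^ k)]
        have hle : ‖z‖⁻¹ ≤ 2 ^ (k+1) / 3 := by
          have h3 : 3 * (2:ℝ)⁻¹ ^ (k+1) ≤ ‖z‖ := by linarith
          have hpos2 : (0:ℝ) < 3 * (2:ℝ)⁻¹ ^ (k+1) := by positivity
          have := inv_anti₀ hpos2 h3
          calc ‖z‖⁻¹ ≤ (3 * (2:ℝ)⁻¹ ^ (k+1))⁻¹ := this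
            _ = 2 ^ (k+1) / 3 := by
              rw [mul_inv, inv_pow, inv_inv]; ring
        calc ENNReal.ofReal ‖z‖⁻¹ ≤ ENNReal.ofReal (2 ^ (k+1) / 3) := ENNReal.ofReal_le_ofReal hle
          _ = F k z := by rw [show F k z = _ from indicator_of_mem hmem _]
          _ ≤ ∑' j : ℕ, F j z := ENNReal.le_tsum k
    have hmeas : ∀ k : ℕ, AEMeasurable (F k) (volume : Measure E) :=
      fun k => (measurable_const.indicator measurableSet_ball).aemeasurable
    calc ∫⁻ z in ball (0:E) 3, ENNReal.ofReal ‖z‖⁻¹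
        ≤ ∫⁻ z in ball (0:E) 3, ∑' k : ℕ, F k z := by
          apply setLIntegral_mono' measurableSet_ball hpt
      _ ≤ ∫⁻ z, ∑' k : ℕ, F k z := setLIntegral_le_lintegral _ _
      _ = ∑' k : ℕ, ∫⁻ z, F k z := lintegral_tsum hmeas
      _ = ∑' k : ℕ, ENNReal.ofReal (2 ^ (k+1) / 3) * volume (ball (0:E) (3 * (2:ℝ)⁻¹ ^ k)) := by
          congr 1; ext k; exact lintegral_indicator_const measurableSet_ball _
      _ ≤ ∑' k : ℕ, (ENNReal.ofReal (2 * 3 ^ (n-1)) * volume (ball (0:E) 1)) * (2:ENNReal)⁻¹ ^ k := by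
          apply ENNReal.tsum_le_tsum
          intro k
          rw [Measure.addHaar_ball volume 0 (by positivity : (0:ℝ) ≤ 3 * (2:ℝ)⁻¹ ^ k),
            finrank_euclideanSpace_fin]
          have hreal : (2:ℝ) ^ (k+1) / 3 * (3 * (2:ℝ)⁻¹ ^ k) ^ n ≤ 2 * 3 ^ (n-1) * (2:ℝ)⁻¹ ^ k := by
            rw [mul_pow, ← pow_mul]
            have h3 : (3:ℝ) ^ n = 3 * 3 ^ (n-1) := by
              rw [← pow_succ']; congr 1; omega
            have h2 : (2:ℝ) ^ (k+1) = 2 * 2 ^ k := by rw [pow_succ']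
            rw [h3, h2]
            simp only [inv_pow]
            have key : (2:ℝ) ^ k * ((2:ℝ) ^ (k*n))⁻¹ ≤ ((2:ℝ) ^ k)⁻¹ := by
              have h4 : (2:ℝ) ^ k * 2 ^ k ≤ 2 ^ (k*n) := by
                calc (2:ℝ) ^ k * 2 ^ k = 2 ^ (k + k) := by rw [pow_add]
                  _ ≤ 2 ^ (k*n) := pow_le_pow_right₀ (by norm_num) (by nlinarith)
              calc (2:ℝ) ^ k * ((2:ℝ) ^ (k*n))⁻¹
                  ≤ (2:ℝ) ^ k * ((2:ℝ) ^ k * 2 ^ k)⁻¹ := by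
                    apply mul_le_mul_of_nonneg_left _ (by positivity)
                    exact inv_anti₀ (by positivity) h4
                _ = ((2:ℝ) ^ k)⁻¹ := by
                    rw [mul_inv]
                    rw [← mul_assoc, mul_inv_cancel₀ (by positivity), one_mul]
            have e3 : (2:ℝ) * 2 ^ k / 3 * (3 * 3 ^ (n-1) * ((2:ℝ) ^ (k*n))⁻¹)
                = (2 * 3 ^ (n-1)) * ((2:ℝ) ^ k * ((2:ℝ) ^ (k*n))⁻¹) := by ring
            rw [e3]
            apply mul_le_mul_of_nonneg_left key (by positivity)
          calc ENNReal.ofReal (2 ^ (k+1) / 3) * (ENNReal.ofReal ((3 * (2:ℝ)⁻¹ ^ k) ^ n)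
                * volume (ball (0:E) 1))
              = ENNReal.ofReal ((2:ℝ) ^ (k+1) / 3 * (3 * (2:ℝ)⁻¹ ^ k) ^ n) * volume (ball (0:E) 1) := by
                rw [← mul_assoc, ← ENNReal.ofReal_mul (by positivity)]
            _ ≤ ENNReal.ofReal (2 * 3 ^ (n-1) * (2:ℝ)⁻¹ ^ k) * volume (ball (0:E) 1) := by
                exact mul_le_mul_left (ENNReal.ofReal_le_ofReal hreal) _
            _ = (ENNReal.ofReal (2 * 3 ^ (n-1)) * volume (ball (0:E) 1)) * (2:ENNReal)⁻¹ ^ k := by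
                rw [ENNReal.ofReal_mul (by positivity)]
                rw [show ENNReal.ofReal ((2:ℝ)⁻¹ ^ k) = (2:ENNReal)⁻¹ ^ k by
                  rw [ENNReal.ofReal_pow (by norm_num)]
                  congr 1
                  rw [ENNReal.ofReal_inv_of_pos (by norm_num)]
                  norm_num]
                ring
      _ < ⊤ := by
          rw [ENNReal.tsum_mul_left, ENNReal.tsum_geometric]
          apply ENNReal.mul_lt_top
          · exact ENNReal.mul_lt_top ENNReal.ofReal_lt_top measure_ball_lt_top
          · rw [ENNReal.one_sub_inv_two]
            simp

lemma reflect_mp (x : E) : MeasurePreserving (fun η : E => x - η) volume volume :=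
  Measure.measurePreserving_sub_left volume x

lemma reflect_emb (x : E) : MeasurableEmbedding (fun η : E => x - η) :=
  (MeasurableEquiv.subLeft x).measurableEmbedding

lemma reflect_preimage (x : E) (r : ℝ) :
    (fun η : E => x - η) ⁻¹' (ball (0 : E) r) = ball x r := by
  ext η
  simp [mem_ball, dist_eq_norm, norm_sub_rev]

lemma integrableOn_inv_norm_sub_ball3 (hn : 2 ≤ n) (x : E) :
    IntegrableOn (fun η : E => ‖x - η‖⁻¹) (ball x 3) volume := by
  have h := ((reflect_mp x).integrableOn_comp_preimage (reflect_emb x)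
    (s := ball (0:E) 3) (f := fun z : E => ‖z‖⁻¹)).mpr (integrableOn_inv_norm_ball3 hn)
  rwa [reflect_preimage] at h

lemma integrableOn_inv_norm_sub (hn : 2 ≤ n) (x : E) :
    IntegrableOn (fun η : E => ‖x - η‖⁻¹) (ball (0 : E) 1) volume := by
  rcases le_or_gt ‖x‖ 2 with hx | hx
  · apply (integrableOn_inv_norm_sub_ball3 hn x).mono_set
    intro η hη
    rw [mem_ball_zero_iff] at hη
    rw [mem_ball, dist_eq_norm, norm_sub_rev]
    calc ‖x - η‖ ≤ ‖x‖ + ‖η‖ := norm_sub_le _ _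
      _ < 3 := by linarith
  · apply Measure.integrableOn_of_bounded (M := 1) (measure_ball_lt_top).ne
      ((measurable_const.sub measurable_id).norm.inv).aestronglyMeasurable
    filter_upwards [ae_restrict_mem measurableSet_ball] with η hη
    rw [mem_ball_zero_iff] at hη
    have h1 : (1:ℝ) ≤ ‖x - η‖ := by
      have := norm_sub_norm_le x η
      linarith [abs_le.mp (abs_norm_sub_norm_le x η)]
    show ‖‖x - η‖⁻¹‖ ≤ 1
    rw [Real.norm_eq_abs, abs_of_nonneg (inv_nonneg.mpr (norm_nonneg _))]
    exact inv_le_one_of_one_le₀ h1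

lemma setIntegral_inv_norm_sub_le (hn : 2 ≤ n) (x : E) (hx : ‖x‖ ≤ 2) :
    ∫ η in ball (0:E) 1, ‖x - η‖⁻¹ ≤ ∫ z in ball (0:E) 3, ‖z‖⁻¹ := by
  have h1 : ∫ η in ball x 3, ‖x - η‖⁻¹ = ∫ z in ball (0:E) 3, ‖z‖⁻¹ := by
    rw [← reflect_preimage x 3]
    exact (reflect_mp x).setIntegral_preimage_emb (reflect_emb x)
      (fun z : E => ‖z‖⁻¹) (ball (0:E) 3)
  rw [← h1]
  apply setIntegral_mono_set (integrableOn_inv_norm_sub_ball3 hn x)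
    (ae_of_all _ fun η => inv_nonneg.mpr (norm_nonneg _))
  apply Filter.Eventually.of_forall
  intro η hη
  rw [show (ball (0:E) 1) η = (η ∈ ball (0:E) 1) from rfl, mem_ball_zero_iff] at hη
  show η ∈ ball x 3
  rw [mem_ball, dist_eq_norm, norm_sub_rev]
  calc ‖x - η‖ ≤ ‖x‖ + ‖η‖ := norm_sub_le _ _
    _ < 3 := by linarith

end AuxStmt16
end AuxStmt16
open AuxStmt16

/-- Two-sided mollification estimate: for a standard mollifier `φ` supported in `B₁(0)`,
`∫_{B₁(0)} (g(|ξ − εη|)/|ξ − εη|) φ(η) dη ≈ g(|ξ| + ε)/(|ξ| + ε)` uniformly in `ε ∈ (0,1)`. -/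
theorem stmt_16 (n : ℕ) (hn : 2 ≤ n) (g₀ g₁ c₀ : ℝ)
    (hg₀ : 1 < g₀) (hg₀₁ : g₀ ≤ g₁) (hc₀ : 1 ≤ c₀) :
    ∃ c : ℝ, 1 ≤ c ∧
      ∀ (g g' : ℝ → ℝ),
        (∀ s : ℝ, 0 < s → 0 < g s) →
        (∀ s : ℝ, 0 < s → HasDerivAt g (g' s) s) →
        ContinuousOn g' (Set.Ioi 0) →
        (∀ s : ℝ, 0 < s → g₀ - 1 ≤ s * g' s / g s ∧ s * g' s / g s ≤ g₁ - 1) →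
      ∀ (φ : EuclideanSpace ℝ (Fin n) → ℝ),
        ContDiff ℝ (⊤ : ℕ∞) φ → HasCompactSupport φ →
        (∀ x, 0 ≤ φ x) →
        Function.support φ ⊆ Metric.ball (0 : EuclideanSpace ℝ (Fin n)) 1 →
        (∫ x : EuclideanSpace ℝ (Fin n), φ x) = 1 →
        (∀ x ∈ Metric.ball (0 : EuclideanSpace ℝ (Fin n)) 1, φ x ≤ c₀) →
        (∀ x ∈ Metric.ball (0 : EuclideanSpace ℝ (Fin n)) (1 / 2), 1 / c₀ ≤ φ x) →
      ∀ ε : ℝ, 0 < ε → ε < 1 → ∀ ξ : EuclideanSpace ℝ (Fin n),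
        c⁻¹ * (g (‖ξ‖ + ε) / (‖ξ‖ + ε)) ≤
          (∫ η in Metric.ball (0 : EuclideanSpace ℝ (Fin n)) 1,
            g ‖ξ - ε • η‖ / ‖ξ - ε • η‖ * φ η) ∧
        (∫ η in Metric.ball (0 : EuclideanSpace ℝ (Fin n)) 1,
            g ‖ξ - ε • η‖ / ‖ξ - ε • η‖ * φ η) ≤
          c * (g (‖ξ‖ + ε) / (‖ξ‖ + ε)) := by

  haveI : Nonempty (Fin n) := ⟨⟨0, by omega⟩⟩
  haveI : Nontrivial (EuclideanSpace ℝ (Fin n)) := by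
    refine ⟨0, EuclideanSpace.single ⟨0, by omega⟩ 1, ?_⟩
    intro h
    have := congrArg (fun v : EuclideanSpace ℝ (Fin n) => v ⟨0, by omega⟩) h
    simp [EuclideanSpace.single_apply] at this
  set E' := EuclideanSpace ℝ (Fin n)
  set C₁ : ℝ := ∫ z in ball (0:E') 3, ‖z‖⁻¹ with hC₁def
  have hC₁0 : 0 ≤ C₁ :=
    setIntegral_nonneg measurableSet_ball fun z _ => inv_nonneg.mpr (norm_nonneg z)
  set vB : ℝ := (volume (ball (0:E') 1)).toReal with hvBdef
  have hvB0 : 0 ≤ vB := ENNReal.toReal_nonneg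
  -- annuli
  set A₁ : Set E' := ball (0:E') (1/4) \ closedBall (0:E') (1/8) with hA₁def
  set A₂ : Set E' := ball (0:E') (1/64) \ closedBall (0:E') (1/128) with hA₂def
  have hA₁open : IsOpen A₁ := isOpen_ball.sdiff isClosed_closedBall
  have hA₂open : IsOpen A₂ := isOpen_ball.sdiff isClosed_closedBall
  have hA₁ne : A₁.Nonempty := by
    refine ⟨EuclideanSpace.single ⟨0, by omega⟩ (3/16 : ℝ), ?_, ?_⟩
    · rw [mem_ball_zero_iff, EuclideanSpace.norm_single]
      rw [Real.norm_eq_abs, abs_of_pos (by norm_num : (0:ℝ) < 3/16)]; norm_num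
    · rw [mem_closedBall_zero_iff, EuclideanSpace.norm_single]
      rw [Real.norm_eq_abs, abs_of_pos (by norm_num : (0:ℝ) < 3/16)]; norm_num
  have hA₂ne : A₂.Nonempty := by
    refine ⟨EuclideanSpace.single ⟨0, by omega⟩ (3/256 : ℝ), ?_, ?_⟩
    · rw [mem_ball_zero_iff, EuclideanSpace.norm_single]
      rw [Real.norm_eq_abs, abs_of_pos (by norm_num : (0:ℝ) < 3/256)]; norm_num
    · rw [mem_closedBall_zero_iff, EuclideanSpace.norm_single]
      rw [Real.norm_eq_abs, abs_of_pos (by norm_num : (0:ℝ) < 3/256)]; norm_num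
  have hA₁top : volume A₁ ≠ ⊤ :=
    ((measure_mono diff_subset).trans_lt measure_ball_lt_top).ne
  have hA₂top : volume A₂ ≠ ⊤ :=
    ((measure_mono diff_subset).trans_lt measure_ball_lt_top).ne
  set v₁ : ℝ := (volume A₁).toReal with hv₁def
  set v₂ : ℝ := (volume A₂).toReal with hv₂def
  have hv₁pos : 0 < v₁ := ENNReal.toReal_pos (hA₁open.measure_pos volume hA₁ne).ne' hA₁top
  have hv₂pos : 0 < v₂ := ENNReal.toReal_pos (hA₂open.measure_pos volume hA₂ne).ne' hA₂top
  set m : ℝ := min v₁ v₂ with hmdef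
  have hm0 : 0 < m := lt_min hv₁pos hv₂pos
  have hpow32 : (0:ℝ) < (32:ℝ) ^ (g₁ - 1) := Real.rpow_pos_of_pos (by norm_num) _
  set c : ℝ := max 1 (max (3*c₀*(C₁+vB)) (c₀ * (32:ℝ)^(g₁-1) / m)) with hcdef
  have hc1 : (1:ℝ) ≤ c := le_max_left _ _
  have hc0 : (0:ℝ) < c := lt_of_lt_of_le one_pos hc1
  have hc₀0 : (0:ℝ) < c₀ := lt_of_lt_of_le one_pos hc₀
  refine ⟨c, hc1, ?_⟩
  intro g g' hgpos hg' _hg'c hb φ hφsm _hφcs hφ0 _hφsupp _hφint hφle hφge ε hε0 hε1 ξ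
  have hmono := g_mono hg₀ hgpos hg' hb
  have hlow := g_low hg₀ hg₀₁ hgpos hg' hb
  set T : ℝ := ‖ξ‖ + ε with hTdef
  have hT0 : 0 < T := by positivity
  have hgT : 0 < g T := hgpos T hT0
  set f : E' → ℝ := fun η => g ‖ξ - ε • η‖ / ‖ξ - ε • η‖ * φ η with hfdef
  have hnormle : ∀ η ∈ ball (0:E') 1, ‖ξ - ε • η‖ ≤ T := by
    intro η hη
    have hηn : ‖η‖ < 1 := mem_ball_zero_iff.mp hη
    calc ‖ξ - ε • η‖ ≤ ‖ξ‖ + ‖ε • η‖ := norm_sub_le _ _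
      _ = ‖ξ‖ + ε * ‖η‖ := by rw [norm_smul, Real.norm_eq_abs, abs_of_pos hε0]
      _ ≤ T := by nlinarith [norm_nonneg η]
  have hf0 : ∀ η, 0 ≤ f η := by
    intro η
    apply mul_nonneg _ (hφ0 η)
    rcases eq_or_lt_of_le (norm_nonneg (ξ - ε • η)) with h | h
    · rw [← h]; simp
    · exact div_nonneg (hgpos _ h).le (norm_nonneg _)
  -- measurability
  have hfmeas : AEStronglyMeasurable f (volume : Measure E') := by
    set U : Set E' := {η | ξ - ε • η ≠ 0} with hUdef
    have hctn : Continuous fun η : E' => ξ - ε • η :=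
      continuous_const.sub (continuous_id.const_smul ε)
    have hUopen : IsOpen U := isOpen_compl_singleton.preimage hctn
    have hgc : ContinuousOn g (Set.Ioi 0) :=
      fun s hs => (hg' s hs).continuousAt.continuousWithinAt
    have hnc : ContinuousOn (fun η : E' => ‖ξ - ε • η‖) U := hctn.norm.continuousOn
    have hcont : ContinuousOn f U := by
      apply ContinuousOn.mul _ hφsm.continuous.continuousOn
      apply ContinuousOn.div (hgc.comp hnc ?_) hnc ?_
      · intro η hη
        exact mem_Ioi.mpr (norm_pos_iff.mpr hη)
      · intro η hη
        exact (norm_pos_iff.mpr hη).ne'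
    have hUc : ∀ᵐ η : E' ∂volume, η ∈ U := by
      have hcompl : Uᶜ = {ε⁻¹ • ξ} := by
        ext η
        simp only [hUdef, mem_compl_iff, mem_setOf_eq, not_not, mem_singleton_iff, sub_eq_zero]
        constructor
        · intro h; rw [h, inv_smul_smul₀ (ne_of_gt hε0)]
        · intro h; rw [h, smul_inv_smul₀ (ne_of_gt hε0)]
      rw [ae_iff]
      have : {η : E' | ¬ η ∈ U} = Uᶜ := rfl
      rw [this, hcompl]
      exact measure_singleton _
    have hres : AEStronglyMeasurable f ((volume : Measure E').restrict U) :=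
      hcont.aestronglyMeasurable hUopen.measurableSet
    rwa [Measure.restrict_eq_self_of_ae_mem hUc] at hres
  -- dominating function
  set x : E' := ε⁻¹ • ξ with hxdef
  have hfac : ∀ η : E', ‖ξ - ε • η‖ = ε * ‖x - η‖ := by
    intro η
    rw [show ξ - ε • η = ε • (x - η) by
      rw [smul_sub, hxdef, smul_inv_smul₀ (ne_of_gt hε0)]]
    rw [norm_smul, Real.norm_eq_abs, abs_of_pos hε0]
  set D : E' → ℝ := fun η => ‖ξ - ε • η‖⁻¹ with hDdef
  have hDeq : D = fun η : E' => ε⁻¹ * ‖x - η‖⁻¹ := by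
    funext η; simp only [hDdef]; rw [hfac η, mul_inv]
  have hDint : IntegrableOn D (ball (0:E') 1) volume := by
    rw [hDeq]
    exact (integrableOn_inv_norm_sub hn x).const_mul ε⁻¹
  have hfub : ∀ η ∈ ball (0:E') 1, f η ≤ c₀ * g T * D η := by
    intro η hη
    rcases eq_or_lt_of_le (norm_nonneg (ξ - ε • η)) with h | h
    · show g ‖ξ - ε • η‖ / ‖ξ - ε • η‖ * φ η ≤ c₀ * g T * ‖ξ - ε • η‖⁻¹
      rw [← h]
      simp
    · have h1 : g ‖ξ - ε • η‖ ≤ g T :=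
        hmono (mem_Ioi.mpr h) (mem_Ioi.mpr hT0) (hnormle η hη)
      have h2 : φ η ≤ c₀ := hφle η hη
      have key : g ‖ξ - ε • η‖ / ‖ξ - ε • η‖ ≤ g T * ‖ξ - ε • η‖⁻¹ := by
        rw [div_eq_mul_inv]
        exact mul_le_mul_of_nonneg_right h1 (inv_nonneg.mpr (norm_nonneg _))
      calc f η ≤ (g T * ‖ξ - ε • η‖⁻¹) * c₀ := by
            exact mul_le_mul key h2 (hφ0 η)
              (mul_nonneg hgT.le (inv_nonneg.mpr (norm_nonneg _)))
        _ = c₀ * g T * D η := by rw [hDdef]; ring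
  have hfint : IntegrableOn f (ball (0:E') 1) volume := by
    apply Integrable.mono' (hDint.const_mul (c₀ * g T)) hfmeas.restrict
    filter_upwards [ae_restrict_mem measurableSet_ball] with η hη
    rw [Real.norm_eq_abs, abs_of_nonneg (hf0 η)]
    exact hfub η hη
  constructor
  · -- LOWER BOUND
    obtain ⟨A, hAhalf, hAmeas, hAm, hAtop, hAnorm⟩ :
        ∃ A : Set E', A ⊆ ball (0:E') (1/2) ∧ MeasurableSet A ∧
          m ≤ (volume A).toReal ∧ volume A ≠ ⊤ ∧
          ∀ η ∈ A, T / 32 ≤ ‖ξ - ε • η‖ := by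
      have hnlb : ∀ η : E', ‖ξ‖ - ε * ‖η‖ ≤ ‖ξ - ε • η‖ := by
        intro η
        calc ‖ξ‖ - ε * ‖η‖ = ‖ξ‖ - ‖ε • η‖ := by
              rw [norm_smul, Real.norm_eq_abs, abs_of_pos hε0]
          _ ≤ ‖ξ - ε • η‖ := norm_sub_norm_le _ _
      have hnlb' : ∀ η : E', ε * ‖η‖ - ‖ξ‖ ≤ ‖ξ - ε • η‖ := by
        intro η
        calc ε * ‖η‖ - ‖ξ‖ = ‖ε • η‖ - ‖ξ‖ := by
              rw [norm_smul, Real.norm_eq_abs, abs_of_pos hε0]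
          _ ≤ ‖ε • η - ξ‖ := norm_sub_norm_le _ _
          _ = ‖ξ - ε • η‖ := norm_sub_rev _ _
      rcases le_or_gt (ε/2) ‖ξ‖ with hcase | hcase
      · refine ⟨A₁, ?_, (hA₁open.measurableSet), min_le_left _ _, hA₁top, ?_⟩
        · intro η hη
          have := mem_ball_zero_iff.mp hη.1
          rw [mem_ball_zero_iff]; linarith
        · intro η hη
          have hη4 : ‖η‖ < 1/4 := mem_ball_zero_iff.mp hη.1
          have := hnlb η
          nlinarith [norm_nonneg η]
      rcases le_or_gt ‖ξ‖ (ε/16) with hcase2 | hcase2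
      · refine ⟨A₁, ?_, (hA₁open.measurableSet), min_le_left _ _, hA₁top, ?_⟩
        · intro η hη
          have := mem_ball_zero_iff.mp hη.1
          rw [mem_ball_zero_iff]; linarith
        · intro η hη
          have hη8 : 1/8 < ‖η‖ := by
            have := hη.2
            rw [mem_closedBall_zero_iff] at this
            linarith [not_le.mp this]
          have := hnlb' η
          nlinarith
      · refine ⟨A₂, ?_, (hA₂open.measurableSet), min_le_right _ _, hA₂top, ?_⟩
        · intro η hη
          have := mem_ball_zero_iff.mp hη.1
          rw [mem_ball_zero_iff]; linarith
        · intro η hη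
          have hη64 : ‖η‖ < 1/64 := mem_ball_zero_iff.mp hη.1
          have := hnlb η
          nlinarith [norm_nonneg η]
    have hAsub : A ⊆ ball (0:E') 1 := by
      intro η hη
      have := mem_ball_zero_iff.mp (hAhalf hη)
      rw [mem_ball_zero_iff]; linarith
    set K : ℝ := (1/c₀) * (((32:ℝ)^(g₁-1))⁻¹) * (g T / T) with hKdef
    have hK0 : 0 ≤ K :=
      mul_nonneg (mul_nonneg (one_div_nonneg.mpr hc₀0.le) (inv_nonneg.mpr hpow32.le))
        (div_nonneg hgT.le hT0.le)
    have hKA : ∀ η ∈ A, K ≤ f η := by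
      intro η hη
      have h1 : T / 32 ≤ ‖ξ - ε • η‖ := hAnorm η hη
      have h2 : ‖ξ - ε • η‖ ≤ T := hnormle η (hAsub hη)
      have hs0 : 0 < ‖ξ - ε • η‖ := lt_of_lt_of_le (by positivity) h1
      have hg1 : g T * (‖ξ - ε • η‖ / T) ^ (g₁ - 1) ≤ g ‖ξ - ε • η‖ := hlow _ _ hs0 h2
      have hg2 : (((32:ℝ)^(g₁-1))⁻¹) ≤ (‖ξ - ε • η‖ / T) ^ (g₁ - 1) := by
        have hr : (32:ℝ)⁻¹ ≤ ‖ξ - ε • η‖ / T := by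
          rw [le_div_iff₀ hT0]; linarith
        calc ((32:ℝ)^(g₁-1))⁻¹ = ((32:ℝ)⁻¹) ^ (g₁-1) := by
              rw [← Real.inv_rpow (by norm_num)]
          _ ≤ (‖ξ - ε • η‖ / T) ^ (g₁ - 1) :=
              Real.rpow_le_rpow (by norm_num) hr (by linarith)
      have hgl : g T * (((32:ℝ)^(g₁-1))⁻¹) ≤ g ‖ξ - ε • η‖ :=
        le_trans (mul_le_mul_of_nonneg_left hg2 hgT.le) hg1
      have hinv : T⁻¹ ≤ ‖ξ - ε • η‖⁻¹ := inv_anti₀ hs0 h2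
      have hφη : 1/c₀ ≤ φ η := hφge η (hAhalf hη)
      have step1 : g T * (((32:ℝ)^(g₁-1))⁻¹) * T⁻¹ ≤ g ‖ξ - ε • η‖ * ‖ξ - ε • η‖⁻¹ :=
        mul_le_mul hgl hinv (by positivity) (hgpos _ hs0).le
      calc K = (g T * (((32:ℝ)^(g₁-1))⁻¹) * T⁻¹) * (1/c₀) := by
            rw [hKdef]; ring
        _ ≤ (g ‖ξ - ε • η‖ * ‖ξ - ε • η‖⁻¹) * φ η := by
            exact mul_le_mul step1 hφη (one_div_nonneg.mpr hc₀0.le)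
              (mul_nonneg (hgpos _ hs0).le (inv_nonneg.mpr (norm_nonneg _)))
        _ = f η := by simp only [hfdef, div_eq_mul_inv]
    have hlower1 : K * m ≤ ∫ η in ball (0:E') 1, f η := by
      calc K * m ≤ K * (volume A).toReal := mul_le_mul_of_nonneg_left hAm hK0
        _ ≤ ∫ η in A, f η :=
            by have := setIntegral_ge_of_const_le_real hAmeas hAtop hKA (hfint.mono_set hAsub)
               exact this
        _ ≤ ∫ η in ball (0:E') 1, f η := by
            apply setIntegral_mono_set hfint (ae_of_all _ hf0)
            exact Filter.Eventually.of_forall fun η hη => hAsub hη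
    have hfinal : c⁻¹ * (g T / T) ≤ K * m := by
      have hc3 : c₀ * (32:ℝ)^(g₁-1) / m ≤ c :=
        le_trans (le_max_right _ _) (le_max_right 1 _)
      have hpos3 : 0 < c₀ * (32:ℝ)^(g₁-1) / m := div_pos (mul_pos hc₀0 hpow32) hm0
      have hcinv : c⁻¹ ≤ m / (c₀ * (32:ℝ)^(g₁-1)) := by
        have := inv_anti₀ hpos3 hc3
        rwa [inv_div] at this
      have heq : K * m = (m / (c₀ * (32:ℝ)^(g₁-1))) * (g T / T) := by
        rw [hKdef]; field_simp
      rw [heq]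
      exact mul_le_mul_of_nonneg_right hcinv (div_nonneg hgT.le hT0.le)
    exact le_trans hfinal hlower1
  · -- UPPER BOUND
    have hI : ∫ η in ball (0:E') 1, D η ≤ 3 * (C₁ + vB) / T := by
      rcases le_or_gt (2*ε) ‖ξ‖ with hcase | hcase
      · have hpt : ∀ η ∈ ball (0:E') 1, D η ≤ 3 / T := by
          intro η hη
          have hηn : ‖η‖ < 1 := mem_ball_zero_iff.mp hη
          have hlb : T / 3 ≤ ‖ξ - ε • η‖ := by
            have h1 : ‖ξ‖ - ε * ‖η‖ ≤ ‖ξ - ε • η‖ := by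
              calc ‖ξ‖ - ε * ‖η‖ = ‖ξ‖ - ‖ε • η‖ := by
                    rw [norm_smul, Real.norm_eq_abs, abs_of_pos hε0]
                _ ≤ ‖ξ - ε • η‖ := norm_sub_norm_le _ _
            nlinarith [norm_nonneg η]
          calc D η = ‖ξ - ε • η‖⁻¹ := rfl
            _ ≤ (T/3)⁻¹ := inv_anti₀ (by positivity) hlb
            _ = 3/T := by rw [inv_div]
        calc ∫ η in ball (0:E') 1, D η ≤ ∫ _η in ball (0:E') 1, 3/T :=
              setIntegral_mono_on hDint
                ((integrableOn_const_iff).mpr (Or.inr measure_ball_lt_top)) measurableSet_ball hpt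
          _ = vB * (3/T) := by rw [setIntegral_const, smul_eq_mul]; rfl
          _ ≤ 3 * (C₁ + vB) / T := by
              rw [div_eq_mul_inv, div_eq_mul_inv]
              have : vB * (3 * T⁻¹) = 3 * vB * T⁻¹ := by ring
              rw [this]
              apply mul_le_mul_of_nonneg_right _ (by positivity)
              nlinarith
      · have hxn : ‖x‖ ≤ 2 := by
          rw [hxdef, norm_smul, Real.norm_eq_abs, abs_of_pos (inv_pos.mpr hε0)]
          rw [inv_mul_le_iff₀ hε0]
          linarith
        calc ∫ η in ball (0:E') 1, D η
            = ∫ η in ball (0:E') 1, ε⁻¹ * ‖x - η‖⁻¹ := by rw [hDeq]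
          _ = ε⁻¹ * ∫ η in ball (0:E') 1, ‖x - η‖⁻¹ := integral_const_mul _ _
          _ ≤ ε⁻¹ * C₁ := by
              apply mul_le_mul_of_nonneg_left _ (by positivity)
              exact setIntegral_inv_norm_sub_le hn x hxn
          _ ≤ 3 * (C₁ + vB) / T := by
              have h3 : ε⁻¹ ≤ 3 / T := by
                rw [le_div_iff₀ hT0, inv_mul_le_iff₀ hε0]
                linarith
              calc ε⁻¹ * C₁ ≤ (3/T) * C₁ := mul_le_mul_of_nonneg_right h3 hC₁0
                _ = 3 * C₁ / T := by ring
                _ ≤ 3 * (C₁ + vB) / T := by gcongr <;> linarith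
    calc ∫ η in ball (0:E') 1, f η ≤ ∫ η in ball (0:E') 1, c₀ * g T * D η :=
          setIntegral_mono_on hfint (hDint.const_mul _) measurableSet_ball hfub
      _ = c₀ * g T * ∫ η in ball (0:E') 1, D η := integral_const_mul _ _
      _ ≤ c₀ * g T * (3 * (C₁ + vB) / T) :=
          mul_le_mul_of_nonneg_left hI (mul_nonneg hc₀0.le hgT.le)
      _ = (3 * c₀ * (C₁ + vB)) * (g T / T) := by ring
      _ ≤ c * (g T / T) := by
          apply mul_le_mul_of_nonneg_right _ (div_nonneg hgT.le hT0.le)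
          exact le_trans (le_max_left _ _) (le_max_right 1 _)
end
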